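/- arXiv:0803.0379 — 10 statements merged into one kernel-verified Lean document; each statement's English description precedes it below -/
import Mathlib

section
/- A countable group G equipped with a proper left invariant metric d_G is finitely generated if and only if (G, d_G) is large scale connected, i.e. there exists s > 0 such that any two elements of G are connected by an s-scale chain. -/
/-!
If `S` generates `G`, any scale `s ≥ d(1, g)` for all `g ∈ S` works: the word `x⁻¹ y` in the
generators, translated on the left by `x`, is an `s`-scale chain from `x` to `y`. Conversely, the
steps `a⁻¹ b` of `s`-scale chains lie in the ball of radius `s` about `1`, which is finite by
properness and generates `G` because every element is reached from `1` by such a chain.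
-/

/-- `d` is a proper left invariant metric on the group `G`. -/
def IsProperLeftInvMetric {G : Type*} [Group G] (d : G → G → ℝ) : Prop :=
  (∀ x y, 0 ≤ d x y) ∧ (∀ x y, d x y = 0 ↔ x = y) ∧ (∀ x y, d x y = d y x) ∧
  (∀ x y z, d x z ≤ d x y + d y z) ∧ (∀ g h₁ h₂, d (g * h₁) (g * h₂) = d h₁ h₂) ∧
  (∀ (x : G) (K : ℝ), {y : G | d x y ≤ K}.Finite)

open Relation

section LeftInvariantRelation

variable {G : Type*} [Group G] {R : G → G → Prop}

theorem Relation.ReflTransGen.mul_left (hR : ∀ g a b, R a b → R (g * a) (g * b)) (g : G)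
    {x y : G} (h : ReflTransGen R x y) : ReflTransGen R (g * x) (g * y) :=
  h.lift (g * ·) (hR g)

theorem reflTransGen_one_of_mem_closure (hR : ∀ g a b, R a b → R (g * a) (g * b))
    [Std.Symm R] {S : Set G} (hS : ∀ s ∈ S, R 1 s) {x : G}
    (hx : x ∈ Subgroup.closure S) : ReflTransGen R 1 x := by
  induction hx using Subgroup.closure_induction with
  | mem s hs => exact .single (hS s hs)
  | one => exact .refl
  | mul a b _ _ ha hb => exact ha.trans (by simpa using hb.mul_left hR a)
  | inv a _ ha => simpa using Std.Symm.symm _ _ (ha.mul_left hR a⁻¹)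

theorem inv_mul_mem_closure_of_reflTransGen {S : Set G} (hR : ∀ a b, R a b → a⁻¹ * b ∈ S)
    {x y : G} (h : ReflTransGen R x y) : x⁻¹ * y ∈ Subgroup.closure S := by
  induction h with
  | refl => simp
  | @tail b c _ hbc ih =>
    simpa [mul_assoc] using mul_mem ih (Subgroup.subset_closure (hR b c hbc))

end LeftInvariantRelation

namespace IsProperLeftInvMetric

variable {G : Type*} [Group G] {d : G → G → ℝ}

theorem dist_comm (hd : IsProperLeftInvMetric d) (a b : G) : d a b = d b a :=
  hd.2.2.1 a b

theorem dist_mul_left (hd : IsProperLeftInvMetric d) (g a b : G) : d (g * a) (g * b) = d a b :=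
  hd.2.2.2.2.1 g a b

theorem finite_closedBall (hd : IsProperLeftInvMetric d) (x : G) (r : ℝ) :
    {y | d x y ≤ r}.Finite :=
  hd.2.2.2.2.2 x r

theorem dist_eq_dist_one_inv_mul (hd : IsProperLeftInvMetric d) (a b : G) :
    d a b = d 1 (a⁻¹ * b) := by
  simpa using (hd.dist_mul_left a⁻¹ a b).symm

theorem reflTransGen_of_closure_eq_top (hd : IsProperLeftInvMetric d) {S : Set G}
    (hS : Subgroup.closure S = ⊤) {s : ℝ} (hs : ∀ g ∈ S, d 1 g ≤ s) (x y : G) :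
    ReflTransGen (fun a b => d a b ≤ s) x y := by
  have hR : ∀ g a b, d a b ≤ s → d (g * a) (g * b) ≤ s := fun g a b h => by
    rwa [hd.dist_mul_left]
  have : Std.Symm fun a b => d a b ≤ s := ⟨fun a b (h : d a b ≤ s) => by rwa [hd.dist_comm]⟩
  have hxy : x⁻¹ * y ∈ Subgroup.closure S := hS ▸ Subgroup.mem_top _
  simpa using (reflTransGen_one_of_mem_closure hR hs hxy).mul_left hR x

theorem fg_of_reflTransGen (hd : IsProperLeftInvMetric d) {s : ℝ}
    (hs : ∀ y : G, ReflTransGen (fun a b => d a b ≤ s) 1 y) : Group.FG G := by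
  refine Group.fg_iff.2 ⟨{g | d 1 g ≤ s}, eq_top_iff.2 fun y _ => ?_, hd.finite_closedBall 1 s⟩
  simpa using inv_mul_mem_closure_of_reflTransGen
    (fun a b h => by rwa [Set.mem_ofPred_eq, ← hd.dist_eq_dist_one_inv_mul]) (hs y)

end IsProperLeftInvMetric

theorem stmt1_general {G : Type*} [Group G] (d : G → G → ℝ)
    (hd : IsProperLeftInvMetric d) :
    Group.FG G ↔ ∃ s : ℝ, 0 < s ∧
      ∀ x y : G, Relation.ReflTransGen (fun a b => d a b ≤ s) x y := by
  constructor
  · rintro ⟨S, hS⟩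
    obtain ⟨s, hs⟩ := (S.image (d 1)).bddAbove
    refine ⟨max s 1, by positivity, hd.reflTransGen_of_closure_eq_top hS fun g hg => ?_⟩
    exact (hs (Finset.mem_image_of_mem _ hg)).trans (le_max_left _ _)
  · rintro ⟨s, -, hs⟩
    exact hd.fg_of_reflTransGen (hs 1)

/-- A countable group with a proper left invariant metric is finitely generated iff it is
large scale connected. -/
theorem stmt1 {G : Type*} [Group G] [Countable G] (d : G → G → ℝ)
    (hd : IsProperLeftInvMetric d) :
    Group.FG G ↔ ∃ s : ℝ, 0 < s ∧
      ∀ x y : G, Relation.ReflTransGen (fun a b => d a b ≤ s) x y :=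
  stmt1_general d hd
end

section
/- Let G be a countable locally finite group with a one-step ascending chain {1} = G₀ < G₁ < G₂ < ... (with G = ⋃ Gᵢ, each Gᵢ finite) and let (Kᵢ) be a strictly increasing sequence of positive reals tending to infinity. Then the function d(x,y) = Kᵢ where i is the unique index with x⁻¹y ∈ Gᵢ \ Gᵢ₋₁ (and d(x,y) = 0 if x = y) is a proper left invariant ultrametric on G. -/
/-!
The distance `d x y` only depends on the first level `c (n + 1)` containing `x⁻¹ * y`, so
`d x y ≤ K n ↔ x⁻¹ * y ∈ c n`: closed balls are cosets of the finite subgroups `c n`. The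
ultrametric inequality is then closure of `c n` under products, and properness holds because
`K` is unbounded.
-/

open Filter

theorem monotone_of_eq_closure_image_lt {G : Type*} [Group G] {c : ℕ → Subgroup G} {g : ℕ → G}
    (hc0 : c 0 = ⊥) (hgen : ∀ i, c (i + 1) = Subgroup.closure (g '' {j | j < i + 1})) :
    Monotone c := by
  refine monotone_nat_of_le_succ fun i => ?_
  cases i with
  | zero => simp [hc0]
  | succ j =>
    rw [hgen j, hgen (j + 1)]
    exact Subgroup.closure_mono (Set.image_mono fun k hk => Nat.lt_succ_of_lt hk)

structure IsChainDist {G : Type*} [Group G] (c : ℕ → Subgroup G) (K : ℕ → ℝ)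
    (d : G → G → ℝ) : Prop where
  monotone : Monotone c
  bot : c 0 = ⊥
  iSup_eq_top : ⨆ i, c i = ⊤
  dist_self : ∀ x, d x x = 0
  dist_eq : ∀ x y i, x⁻¹ * y ∈ c (i + 1) → x⁻¹ * y ∉ c i → d x y = K (i + 1)

namespace IsChainDist

variable {G : Type*} [Group G] {c : ℕ → Subgroup G} {K : ℕ → ℝ} {d : G → G → ℝ}

theorem exists_mem_succ_notMem (hd : IsChainDist c K d) {a : G} (ha : a ≠ 1) :
    ∃ n, a ∈ c (n + 1) ∧ a ∉ c n := by
  classical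
  have hex : ∃ i, a ∈ c i :=
    (Subgroup.mem_iSup_of_directed hd.monotone.directed_le).mp
      (hd.iSup_eq_top ▸ Subgroup.mem_top a)
  obtain ⟨n, hn⟩ : ∃ n, Nat.find hex = n + 1 :=
    Nat.exists_eq_succ_of_ne_zero fun h => ha <| by simpa [h, hd.bot] using Nat.find_spec hex
  exact ⟨n, hn ▸ Nat.find_spec hex, Nat.find_min hex (by omega)⟩

theorem exists_dist_eq_of_ne (hd : IsChainDist c K d) {x y : G} (hxy : x ≠ y) :
    ∃ n, x⁻¹ * y ∈ c (n + 1) ∧ x⁻¹ * y ∉ c n ∧ d x y = K (n + 1) := by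
  obtain ⟨n, hn, hn'⟩ := hd.exists_mem_succ_notMem (a := x⁻¹ * y) (by simpa [inv_mul_eq_one])
  exact ⟨n, hn, hn', hd.dist_eq x y n hn hn'⟩

theorem dist_nonneg (hd : IsChainDist c K d) (hK : ∀ i, 0 < K i) (x y : G) : 0 ≤ d x y := by
  obtain rfl | hxy := eq_or_ne x y
  · exact (hd.dist_self x).ge
  · obtain ⟨n, -, -, h⟩ := hd.exists_dist_eq_of_ne hxy
    exact h ▸ (hK _).le

theorem dist_eq_zero_iff (hd : IsChainDist c K d) (hK : ∀ i, 0 < K i) (x y : G) :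
    d x y = 0 ↔ x = y := by
  refine ⟨fun h => by_contra fun hxy => ?_, fun h => h ▸ hd.dist_self x⟩
  obtain ⟨n, -, -, h'⟩ := hd.exists_dist_eq_of_ne hxy
  exact (hK (n + 1)).ne' (h' ▸ h)

theorem dist_congr (hd : IsChainDist c K d) {x y x' y' : G}
    (h : ∀ n, x⁻¹ * y ∈ c n ↔ x'⁻¹ * y' ∈ c n) : d x y = d x' y' := by
  obtain rfl | hxy := eq_or_ne x y
  · have : x'⁻¹ * y' ∈ c 0 := (h 0).mp (by simp)
    rw [hd.bot, Subgroup.mem_bot, inv_mul_eq_one] at this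
    rw [this, hd.dist_self, hd.dist_self]
  · obtain ⟨n, hn, hn', hdn⟩ := hd.exists_dist_eq_of_ne hxy
    rw [hdn, hd.dist_eq x' y' n ((h _).mp hn) (mt (h n).mpr hn')]

theorem dist_comm (hd : IsChainDist c K d) (x y : G) : d x y = d y x :=
  hd.dist_congr fun n => by rw [← inv_mem_iff, mul_inv_rev, inv_inv]

theorem dist_mul_left (hd : IsChainDist c K d) (g h₁ h₂ : G) : d (g * h₁) (g * h₂) = d h₁ h₂ :=
  hd.dist_congr fun n => by rw [mul_inv_rev, mul_assoc, inv_mul_cancel_left]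

theorem dist_le_iff (hd : IsChainDist c K d) (hK : ∀ i, 0 < K i) (hKmono : StrictMono K)
    (x y : G) (n : ℕ) : d x y ≤ K n ↔ x⁻¹ * y ∈ c n := by
  obtain rfl | hxy := eq_or_ne x y
  · simpa [hd.dist_self] using (hK n).le
  · obtain ⟨m, hm, hm', hdm⟩ := hd.exists_dist_eq_of_ne hxy
    rw [hdm, hKmono.le_iff_le]
    refine ⟨fun hle => hd.monotone hle hm, fun hmem => ?_⟩
    by_contra! hlt
    exact hm' (hd.monotone (Nat.le_of_lt_succ hlt) hmem)

theorem dist_le_max (hd : IsChainDist c K d) (hK : ∀ i, 0 < K i) (hKmono : StrictMono K)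
    (x y z : G) : d x z ≤ max (d x y) (d y z) := by
  obtain rfl | hxy := eq_or_ne x y
  · exact le_max_right _ _
  obtain rfl | hyz := eq_or_ne y z
  · exact le_max_left _ _
  obtain ⟨p, -, -, hp⟩ := hd.exists_dist_eq_of_ne hxy
  obtain ⟨q, -, -, hq⟩ := hd.exists_dist_eq_of_ne hyz
  have hmax : max (d x y) (d y z) = K (max (p + 1) (q + 1)) := by
    rw [hp, hq, hKmono.monotone.map_max]
  have hxy' := (hd.dist_le_iff hK hKmono x y _).mp (hmax ▸ le_max_left _ _)
  have hyz' := (hd.dist_le_iff hK hKmono y z _).mp (hmax ▸ le_max_right _ _)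
  rw [hmax, hd.dist_le_iff hK hKmono, ← mul_inv_cancel_left y z, ← mul_assoc]
  exact mul_mem hxy' hyz'

theorem finite_setOf_dist_le (hd : IsChainDist c K d) (hK : ∀ i, 0 < K i)
    (hKmono : StrictMono K) (hKtop : Tendsto K atTop atTop) (hfin : ∀ i, (c i : Set G).Finite)
    (x : G) (r : ℝ) : {y | d x y ≤ r}.Finite := by
  obtain ⟨N, hN⟩ := (hKtop.eventually_gt_atTop r).exists
  refine ((hfin N).image (x * ·)).subset fun y hy => ⟨x⁻¹ * y, ?_, mul_inv_cancel_left x y⟩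
  exact (hd.dist_le_iff hK hKmono x y N).mp (le_trans hy hN.le)

end IsChainDist

theorem stmt2_general {G : Type*} [Group G]
    (c : ℕ → Subgroup G) (g : ℕ → G)
    (hc0 : c 0 = ⊥)
    (hgen : ∀ i, c (i + 1) = Subgroup.closure (g '' {j | j < i + 1}))
    (hfin : ∀ i, ((c i : Set G)).Finite)
    (hunion : (⨆ i, c i) = ⊤)
    (K : ℕ → ℝ) (hKpos : ∀ i, 0 < K i) (hKmono : StrictMono K)
    (hKtop : Filter.Tendsto K Filter.atTop Filter.atTop)
    (d : G → G → ℝ)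
    (hdiag : ∀ x, d x x = 0)
    (hdval : ∀ x y i, x⁻¹ * y ∈ c (i + 1) → x⁻¹ * y ∉ c i → d x y = K (i + 1)) :
    IsProperLeftInvMetric d ∧ ∀ x y z, d x z ≤ max (d x y) (d y z) := by
  have hd : IsChainDist c K d :=
    ⟨monotone_of_eq_closure_image_lt hc0 hgen, hc0, hunion, hdiag, hdval⟩
  have hultra := hd.dist_le_max hKpos hKmono
  have hnonneg := hd.dist_nonneg hKpos
  refine ⟨⟨hnonneg, hd.dist_eq_zero_iff hKpos, hd.dist_comm, fun x y z => ?_, hd.dist_mul_left,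
    hd.finite_setOf_dist_le hKpos hKmono hKtop hfin⟩, hultra⟩
  exact (hultra x y z).trans (max_le_add_of_nonneg (hnonneg x y) (hnonneg y z))

/-- The ultrametric generated by a one-step ascending chain of a locally finite group and a
strictly increasing unbounded sequence of positive reals is a proper left invariant
ultrametric. -/
theorem stmt2 {G : Type*} [Group G] [Countable G]
    (c : ℕ → Subgroup G) (g : ℕ → G)
    (hc0 : c 0 = ⊥)
    (hgen : ∀ i, c (i + 1) = Subgroup.closure (g '' {j | j < i + 1}))
    (hnot : ∀ i, g i ∉ c i)
    (hfin : ∀ i, ((c i : Set G)).Finite)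
    (hunion : (⨆ i, c i) = ⊤)
    (K : ℕ → ℝ) (hKpos : ∀ i, 0 < K i) (hKmono : StrictMono K)
    (hKtop : Filter.Tendsto K Filter.atTop Filter.atTop)
    (d : G → G → ℝ)
    (hdiag : ∀ x, d x x = 0)
    (hdval : ∀ x y i, x⁻¹ * y ∈ c (i + 1) → x⁻¹ * y ∉ c i → d x y = K (i + 1)) :
    IsProperLeftInvMetric d ∧ ∀ x y z, d x z ≤ max (d x y) (d y z) :=
  stmt2_general c g hc0 hgen hfin hunion K hKpos hKmono hKtop d hdiag hdval
end

section
/- Every countable locally finite abelian group G admits a one-step ascending chain {1} = G₀ < G₁ < G₂ < ... (union equal to G) such that every index [Gᵢ₊₁ : Gᵢ] is a prime number. -/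
/-!
Enumerate `G` as `e 0, e 1, …`. Starting from `⊥`, adjoin at each step a power of the first `e j`
outside the current subgroup `H` whose image in `G ⧸ H` has prime order `p`; the step then has
index `p`. Every stage is finitely generated, hence finite and proper. If some `e k` never entered
the chain, then from some stage on every new generator would be a power of `e k`, trapping a
strictly increasing chain of subgroups inside the finite subgroup generated by `e k` and that stage.
-/

open Subgroup

section PrimeStep

variable {G : Type*} [Group G]

theorem Subgroup.relIndex_sup_zpowers (H : Subgroup G) [H.Normal] (g : G) :
    H.relIndex (H ⊔ zpowers g) = orderOf (g : G ⧸ H) := by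
  have key := relIndex_comap (⊥ : Subgroup (G ⧸ H)) (QuotientGroup.mk' H) (H ⊔ zpowers g)
  rw [MonoidHom.comap_bot, QuotientGroup.ker_mk'] at key
  rw [key, relIndex_bot_left, map_sup, MonoidHom.map_zpowers,
    (map_eq_bot_iff H).mpr (QuotientGroup.ker_mk' H).ge, bot_sup_eq, Nat.card_zpowers]
  rfl

theorem Subgroup.notMem_of_relIndex_sup_zpowers_prime {H : Subgroup G} {g : G}
    (hp : (H.relIndex (H ⊔ zpowers g)).Prime) : g ∉ H := fun hg ↦
  hp.ne_one (relIndex_eq_one.2 (sup_le le_rfl (zpowers_le.2 hg)))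

theorem Subgroup.finite_setOf_le {L : Subgroup G} (hL : (L : Set G).Finite) :
    {H : Subgroup G | H ≤ L}.Finite :=
  hL.finite_subsets.preimage SetLike.coe_injective.injOn

noncomputable def primeStep (H : Subgroup G) [H.Normal] (x : G) : G :=
  x ^ (orderOf (x : G ⧸ H) / (orderOf (x : G ⧸ H)).minFac)

variable {H : Subgroup G} [H.Normal]

theorem orderOf_mk_primeStep {x : G} (hx : IsOfFinOrder x) :
    orderOf ((primeStep H x : G) : G ⧸ H) = (orderOf (x : G ⧸ H)).minFac := by
  rw [primeStep, QuotientGroup.mk_pow, orderOf_pow_orderOf_div _ (Nat.minFac_dvd _)]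
  exact ((QuotientGroup.mk' H).isOfFinOrder hx).orderOf_pos.ne'

theorem relIndex_sup_zpowers_primeStep_prime {x : G} (hx : IsOfFinOrder x) (hxH : x ∉ H) :
    (H.relIndex (H ⊔ zpowers (primeStep H x))).Prime := by
  rw [relIndex_sup_zpowers, orderOf_mk_primeStep hx]
  refine Nat.minFac_prime fun h ↦ hxH ?_
  rwa [orderOf_eq_one_iff, QuotientGroup.eq_one_iff] at h

end PrimeStep

section LocallyFinite

variable {G : Type*} [Group G] (hlf : ∀ S : Finset G, ((closure (S : Set G)) : Set G).Finite)
include hlf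

theorem finite_closure_of_locallyFinite {S : Set G} (hS : S.Finite) :
    (closure S : Set G).Finite := by
  simpa using hlf hS.toFinset

theorem isOfFinOrder_of_locallyFinite (x : G) : IsOfFinOrder x := by
  rw [← finite_zpowers, zpowers_eq_closure]
  exact finite_closure_of_locallyFinite hlf (Set.finite_singleton x)

end LocallyFinite

section PrimeChain

variable {G : Type*} [CommGroup G] (e : ℕ → G)

noncomputable def nextGen (H : Subgroup G) : G :=
  primeStep H (e (sInf {j | e j ∉ H}))

noncomputable def primeChain : ℕ → Subgroup G
  | 0 => ⊥
  | i + 1 => primeChain i ⊔ zpowers (nextGen e (primeChain i))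

theorem primeChain_eq_closure (i : ℕ) :
    primeChain e i = closure ((fun j ↦ nextGen e (primeChain e j)) '' {j | j < i}) := by
  induction i with
  | zero => simp [primeChain]
  | succ i ih =>
    have hIio : {j | j < i + 1} = {j | j < i} ∪ {i} := by ext; simp [le_iff_lt_or_eq, or_comm]
    rw [hIio, Set.image_union, Set.image_singleton, Subgroup.closure_union, ← ih,
      ← zpowers_eq_closure]
    rfl

theorem primeChain_mono : Monotone (primeChain e) :=
  monotone_nat_of_le_succ fun _ ↦ le_sup_left

variable {e}

theorem nextGen_mem_zpowers {H : Subgroup G} {k : ℕ} (hk : e k ∉ H) (hlt : ∀ j < k, e j ∈ H) :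
    nextGen e H ∈ zpowers (e k) := by
  have hfirst : sInf {j | e j ∉ H} = k :=
    le_antisymm (Nat.sInf_le hk) (le_csInf ⟨k, hk⟩ fun j hj ↦ not_lt.1 fun h ↦ hj (hlt j h))
  rw [nextGen, hfirst, primeStep]
  exact pow_mem (mem_zpowers _) _

variable (htors : ∀ x : G, IsOfFinOrder x)
include htors

theorem relIndex_primeChain_succ_prime {i : ℕ} (h : ∃ j, e j ∉ primeChain e i) :
    ((primeChain e i).relIndex (primeChain e (i + 1))).Prime :=
  relIndex_sup_zpowers_primeStep_prime (htors _) (Nat.sInf_mem h)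

theorem primeChain_lt_succ {i : ℕ} (h : ∃ j, e j ∉ primeChain e i) :
    primeChain e i < primeChain e (i + 1) :=
  left_lt_sup.2 fun hle ↦ notMem_of_relIndex_sup_zpowers_prime
    (relIndex_primeChain_succ_prime htors h) (zpowers_le.1 hle)

end PrimeChain

section LocallyFiniteChain

variable {G : Type*} [CommGroup G] {e : ℕ → G}
  (hlf : ∀ S : Finset G, ((closure (S : Set G)) : Set G).Finite)
include hlf

theorem exists_notMem_primeChain [Infinite G] (he : Function.Surjective e) (i : ℕ) :
    ∃ j, e j ∉ primeChain e i := by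
  have hfin : (primeChain e i : Set G).Finite := by
    rw [primeChain_eq_closure]
    exact finite_closure_of_locallyFinite hlf ((Set.finite_Iio i).image _)
  obtain ⟨x, hx⟩ := hfin.exists_notMem
  obtain ⟨j, rfl⟩ := he x
  exact ⟨j, hx⟩

theorem iSup_primeChain_eq_top (he : Function.Surjective e) : ⨆ i, primeChain e i = ⊤ := by
  classical
  by_contra hne
  obtain ⟨x, hx⟩ := SetLike.exists_not_mem_of_ne_top _ hne
  have hk : ∃ k, ∀ i, e k ∉ primeChain e i := by
    obtain ⟨k, rfl⟩ := he x
    exact ⟨k, fun i hi ↦ hx (mem_iSup_of_mem i hi)⟩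
  set k := Nat.find hk
  have hbefore : ((Finset.range k).image e : Set G) ⊆ ⋃ i, (primeChain e i : Set G) := by
    simp only [Finset.coe_image, Finset.coe_range, Set.image_subset_iff, Set.preimage_iUnion]
    intro j hj
    simpa using Nat.find_min hk hj
  obtain ⟨i₀, hi₀⟩ := (Monotone.directed_le fun _ _ h ↦ SetLike.coe_subset_coe.2
    (primeChain_mono e h)).exists_mem_subset_of_finset_subset_biUnion hbefore
  set L := primeChain e i₀ ⊔ zpowers (e k) with hL_def
  have hL : (L : Set G).Finite := by
    rw [hL_def, primeChain_eq_closure, zpowers_eq_closure, ← Subgroup.closure_union]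
    exact finite_closure_of_locallyFinite hlf
      (((Set.finite_Iio i₀).image _).union (Set.finite_singleton _))
  have hbound : ∀ n, primeChain e (i₀ + n) ≤ L := by
    intro n
    induction n with
    | zero => exact le_sup_left
    | succ n ih =>
      refine sup_le ih (zpowers_le.2 (le_sup_right (a := primeChain e i₀) ?_))
      exact nextGen_mem_zpowers (Nat.find_spec hk _) fun j hj ↦ primeChain_mono e
        (Nat.le_add_right i₀ n) (hi₀ (Finset.mem_image_of_mem e (Finset.mem_range.2 hj)))
  have hstrict : StrictMono fun n ↦ primeChain e (i₀ + n) :=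
    strictMono_nat_of_lt_succ fun _ ↦
      primeChain_lt_succ (isOfFinOrder_of_locallyFinite hlf) ⟨k, Nat.find_spec hk _⟩
  exact Set.infinite_range_of_injective hstrict.injective
    ((finite_setOf_le hL).subset (Set.range_subset_iff.2 hbound))

end LocallyFiniteChain

/-- Every countably infinite locally finite abelian group admits a one-step ascending chain
with prime indexes. -/
theorem stmt3 {G : Type*} [CommGroup G] [Countable G] [Infinite G]
    (hlf : ∀ S : Finset G, ((Subgroup.closure (S : Set G)) : Set G).Finite) :
    ∃ (c : ℕ → Subgroup G) (g : ℕ → G),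
      c 0 = ⊥ ∧
      (∀ i, c (i + 1) = Subgroup.closure (g '' {j | j < i + 1})) ∧
      (∀ i, g i ∉ c i) ∧
      (⨆ i, c i) = ⊤ ∧
      ∀ i, Nat.Prime ((c i).relIndex (c (i + 1))) := by
  obtain ⟨e, he⟩ := exists_surjective_nat G
  have hprime (i : ℕ) : ((primeChain e i).relIndex (primeChain e (i + 1))).Prime :=
    relIndex_primeChain_succ_prime (isOfFinOrder_of_locallyFinite hlf)
      (exists_notMem_primeChain hlf he i)
  exact ⟨primeChain e, fun i ↦ nextGen e (primeChain e i), rfl,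
    fun i ↦ primeChain_eq_closure e (i + 1),
    fun i ↦ notMem_of_relIndex_sup_zpowers_prime (hprime i), iSup_primeChain_eq_top hlf he, hprime⟩
end

section
/- Let G be a countable abelian group, H ≤ G a subgroup such that every element of G/H has odd order, and let H = G₀ < G₁ < ... be a one-step ascending chain associated to H with generators (gᵢ) and odd indexes mᵢ = 2kᵢ + 1. Then every element g ∈ G can be written uniquely as g = h + Σᵢ rᵢ·gᵢ where h ∈ H, each rᵢ is an integer with |rᵢ| ≤ kᵢ, and rᵢ = 0 for all but finitely many i. -/
/-!
Modulo `Gᵢ` the generator `gᵢ` has order `mᵢ = 2kᵢ + 1`, so a multiple `t • gᵢ` may be replaced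
modulo `Gᵢ` by its balanced residue `s • gᵢ` with `|s| ≤ kᵢ`; peeling off generators from the top
of a level `Gₙ ∋ x` gives a representation. Two representations differ by coefficients `dᵢ` with
`|dᵢ| ≤ 2kᵢ < mᵢ`; if `n` is the largest index with `dₙ ≠ 0`, then `dₙ • gₙ ∈ Gₙ`, so `mₙ ∣ dₙ`,
which is impossible.
-/

open AddSubgroup

theorem Int.abs_bmod_two_mul_add_one_le (t : ℤ) (k : ℕ) : |t.bmod (2 * k + 1)| ≤ k := by
  have lower := Int.le_bmod (x := t) (m := 2 * k + 1) (by omega)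
  have upper := Int.bmod_le (x := t) (m := 2 * k + 1) (by omega)
  push_cast at lower upper
  rw [abs_le]
  constructor <;> omega

namespace AddSubgroup

variable {G : Type*} [AddCommGroup G]

theorem relIndex_sup_closure_singleton (N : AddSubgroup G) (a : G) :
    N.relIndex (N ⊔ closure {a}) = addOrderOf (a : G ⧸ N) := by
  have h := relIndex_ker (K := closure {a}) (QuotientAddGroup.mk' N)
  rw [QuotientAddGroup.ker_mk'] at h
  rw [relIndex_sup_left, h, ← zmultiples_eq_closure, AddMonoidHom.map_zmultiples,
    Nat.card_zmultiples, QuotientAddGroup.mk'_apply]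

theorem zsmul_mem_iff_addOrderOf_dvd {N : AddSubgroup G} {a : G} {t : ℤ} :
    t • a ∈ N ↔ (addOrderOf (a : G ⧸ N) : ℤ) ∣ t := by
  rw [addOrderOf_dvd_iff_zsmul_eq_zero, ← QuotientAddGroup.mk_zsmul,
    QuotientAddGroup.eq_zero_iff]

end AddSubgroup

section OneStepChain

variable {G : Type*} [AddCommGroup G] {c : ℕ → AddSubgroup G} {g : ℕ → G}

theorem monotone_of_eq_sup_closure (hstep : ∀ i, c (i + 1) = c i ⊔ closure {g i}) :
    Monotone c :=
  monotone_nat_of_le_succ fun i => hstep i ▸ le_sup_left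

theorem mem_succ_of_eq_sup_closure (hstep : ∀ i, c (i + 1) = c i ⊔ closure {g i}) (i : ℕ) :
    g i ∈ c (i + 1) :=
  hstep i ▸ mem_sup_right (subset_closure rfl)

theorem linearCombination_mem_of_support_lt (hstep : ∀ i, c (i + 1) = c i ⊔ closure {g i})
    {r : ℕ →₀ ℤ} {n : ℕ} (hr : ∀ i ∈ r.support, i < n) :
    Finsupp.linearCombination ℤ g r ∈ c n := by
  rw [Finsupp.linearCombination_apply]
  exact sum_mem fun i hi =>
    zsmul_mem (monotone_of_eq_sup_closure hstep (hr i hi) (mem_succ_of_eq_sup_closure hstep i)) _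

theorem eq_zero_of_linearCombination_mem (hstep : ∀ i, c (i + 1) = c i ⊔ closure {g i})
    {r : ℕ →₀ ℤ} (hr : ∀ i, |r i| < addOrderOf (g i : G ⧸ c i))
    (hmem : Finsupp.linearCombination ℤ g r ∈ c 0) : r = 0 := by
  induction r using Finsupp.induction_on_max with
  | zero => rfl
  | single_add n t f hlt ht _ =>
    exfalso
    have hfn : f n = 0 := Finsupp.notMem_support_iff.mp fun hn => (hlt n hn).false
    have hf : Finsupp.linearCombination ℤ g f ∈ c n := linearCombination_mem_of_support_lt hstep hlt
    rw [map_add, Finsupp.linearCombination_single] at hmem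
    have htn : t • g n ∈ c n := by
      simpa using sub_mem (monotone_of_eq_sup_closure hstep n.zero_le hmem) hf
    have hbound := hr n
    rw [Finsupp.add_apply, hfn, add_zero, Finsupp.single_eq_same] at hbound
    exact ht (Int.eq_zero_of_abs_lt_dvd (zsmul_mem_iff_addOrderOf_dvd.mp htn) hbound)

theorem exists_balanced_repr_of_mem (hstep : ∀ i, c (i + 1) = c i ⊔ closure {g i}) {k : ℕ → ℕ}
    (hord : ∀ i, addOrderOf (g i : G ⧸ c i) = 2 * k i + 1) (n : ℕ) {x : G} (hx : x ∈ c n) :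
    ∃ h ∈ c 0, ∃ r : ℕ →₀ ℤ, (∀ i, |r i| ≤ k i) ∧ (∀ i ∈ r.support, i < n) ∧
      x = h + Finsupp.linearCombination ℤ g r := by
  induction n generalizing x with
  | zero => exact ⟨x, hx, 0, by simp, by simp, by simp⟩
  | succ n ih =>
    rw [hstep n, mem_sup] at hx
    obtain ⟨y, hy, _, hz, rfl⟩ := hx
    obtain ⟨t, rfl⟩ := mem_closure_singleton.mp hz
    set s := t.bmod (2 * k n + 1)
    have hy' : y + (t - s) • g n ∈ c n :=
      add_mem hy (zsmul_mem_iff_addOrderOf_dvd.mpr (by rw [hord]; exact Int.dvd_self_sub_bmod))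
    obtain ⟨h, hh, q, hq, hqlt, hyq⟩ := ih hy'
    have hqn : q n = 0 := Finsupp.notMem_support_iff.mp fun hn => (hqlt n hn).false
    refine ⟨h, hh, q + Finsupp.single n s, fun i => ?_, fun i hi => ?_, ?_⟩
    · rcases eq_or_ne i n with rfl | hin
      · simpa [hqn, s] using Int.abs_bmod_two_mul_add_one_le t (k i)
      · simpa [Finsupp.single_eq_of_ne hin] using hq i
    · rcases Finset.mem_union.mp (Finsupp.support_add hi) with hi | hi
      · exact (hqlt i hi).trans n.lt_succ_self
      · exact Nat.lt_succ_of_le (Finset.mem_singleton.mp (Finsupp.support_single_subset hi)).le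
    · rw [map_add, Finsupp.linearCombination_single, ← add_assoc, ← hyq, add_assoc, ← add_smul,
        sub_add_cancel]

theorem existsUnique_balanced_repr (hstep : ∀ i, c (i + 1) = c i ⊔ closure {g i}) {k : ℕ → ℕ}
    (hord : ∀ i, addOrderOf (g i : G ⧸ c i) = 2 * k i + 1) (hunion : ⨆ i, c i = ⊤) (x : G) :
    ∃! p : G × (ℕ →₀ ℤ), p.1 ∈ c 0 ∧ (∀ i, |p.2 i| ≤ k i) ∧
      x = p.1 + Finsupp.linearCombination ℤ g p.2 := by
  obtain ⟨n, hxn⟩ := (mem_iSup_of_directed (monotone_of_eq_sup_closure hstep).directed_le).mp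
    (hunion ▸ mem_top x)
  obtain ⟨h, hh, r, hr, -, hx⟩ := exists_balanced_repr_of_mem hstep hord n hxn
  refine ⟨(h, r), ⟨hh, hr, hx⟩, ?_⟩
  rintro ⟨h', r'⟩ ⟨hh', hr', hx'⟩
  dsimp only at hh' hr' hx'
  have hsum : Finsupp.linearCombination ℤ g (r' - r) = h - h' := by
    rw [map_sub, sub_eq_sub_iff_add_eq_add, add_comm, ← hx', ← hx]
  have hr'r : r' - r = 0 := by
    refine eq_zero_of_linearCombination_mem hstep (fun i => ?_) (hsum ▸ sub_mem hh hh')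
    rw [hord, Finsupp.sub_apply]
    calc |r' i - r i| ≤ |r' i| + |r i| := abs_sub _ _
      _ ≤ k i + k i := add_le_add (hr' i) (hr i)
      _ < ((2 * k i + 1 : ℕ) : ℤ) := by push_cast; omega
  obtain rfl := sub_eq_zero.mp hr'r
  obtain rfl : h' = h := add_right_cancel (hx'.symm.trans hx)
  rfl

end OneStepChain

theorem stmt4_general {G : Type*} [AddCommGroup G]
    (H : AddSubgroup G)
    (c : ℕ → AddSubgroup G) (g : ℕ → G) (k : ℕ → ℕ)
    (hc0 : c 0 = H)
    (hstep : ∀ i, c (i + 1) = c i ⊔ AddSubgroup.closure {g i})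
    (hunion : (⨆ i, c i) = ⊤)
    (hindex : ∀ i, (c i).relIndex (c (i + 1)) = 2 * k i + 1) :
    ∀ x : G, ∃! p : G × (ℕ →₀ ℤ),
      p.1 ∈ H ∧ (∀ i, |p.2 i| ≤ (k i : ℤ)) ∧
        x = p.1 + p.2.sum fun i r => r • g i := by
  have hord : ∀ i, addOrderOf (g i : G ⧸ c i) = 2 * k i + 1 := fun i => by
    rw [← relIndex_sup_closure_singleton, ← hstep, hindex]
  subst hc0
  simpa only [Finsupp.linearCombination_apply] using existsUnique_balanced_repr hstep hord hunion

/-- Unique representation of elements of an odd pair `(G, H)` with respect to a one-step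
ascending chain associated to `H`: every `x ∈ G` is uniquely `h + Σᵢ rᵢ • gᵢ` with
`h ∈ H`, `|rᵢ| ≤ kᵢ`, and finitely many `rᵢ` nonzero. -/
theorem stmt4 {G : Type*} [AddCommGroup G] [Countable G]
    (H : AddSubgroup G) (hodd : ∀ x : G ⧸ H, Odd (addOrderOf x))
    (c : ℕ → AddSubgroup G) (g : ℕ → G) (k : ℕ → ℕ)
    (hc0 : c 0 = H)
    (hstep : ∀ i, c (i + 1) = c i ⊔ AddSubgroup.closure {g i})
    (hnot : ∀ i, g i ∉ c i)
    (hunion : (⨆ i, c i) = ⊤)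
    (hindex : ∀ i, (c i).relIndex (c (i + 1)) = 2 * k i + 1) :
    ∀ x : G, ∃! p : G × (ℕ →₀ ℤ),
      p.1 ∈ H ∧ (∀ i, |p.2 i| ≤ (k i : ℤ)) ∧
        x = p.1 + p.2.sum fun i r => r • g i :=
  stmt4_general H c g k hc0 hstep hunion hindex
end

section
/- The short exact sequence 0 → ℤ → ℤ[1/2] → ℤ(2^∞) → 0 coarsely splits: there exist proper left invariant metrics on ℤ[1/2] and on the Prüfer 2-group ℤ(2^∞), with ℤ carrying its standard word metric, and a coarse equivalence f : ℤ[1/2] → ℤ ⊕ ℤ(2^∞) (with the ℓ¹-sum metric) such that f restricted to ℤ is the identity inclusion onto the first factor and the composition of f with projection to ℤ(2^∞) equals the quotient map ℤ[1/2] → ℤ[1/2]/ℤ ≅ ℤ(2^∞). -/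
/-- `d` is a proper (left) invariant metric on the additive group `G`. -/
def IsProperInvAddMetric {G : Type*} [AddGroup G] (d : G → G → ℝ) : Prop :=
  (∀ x y, 0 ≤ d x y) ∧ (∀ x y, d x y = 0 ↔ x = y) ∧ (∀ x y, d x y = d y x) ∧
  (∀ x y z, d x z ≤ d x y + d y z) ∧ (∀ g h₁ h₂, d (g + h₁) (g + h₂) = d h₁ h₂) ∧
  (∀ (x : G) (K : ℝ), {y : G | d x y ≤ K}.Finite)

/-- `f` is a coarse map between the metric spaces `(X, dX)` and `(Y, dY)`. -/
def IsCoarseMap {X Y : Type*} (dX : X → X → ℝ) (dY : Y → Y → ℝ) (f : X → Y) : Prop :=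
  ∀ δ : ℝ, 0 < δ → ∃ ε : ℝ, ∀ x y, dX x y ≤ δ → dY (f x) (f y) ≤ ε

/-- `f` is a coarse equivalence between `(X, dX)` and `(Y, dY)`: it is a coarse map
with a coarse inverse, the two compositions being at bounded distance from identities. -/
def IsCoarseEquiv {X Y : Type*} (dX : X → X → ℝ) (dY : Y → Y → ℝ) (f : X → Y) : Prop :=
  IsCoarseMap dX dY f ∧ ∃ g : Y → X, IsCoarseMap dY dX g ∧
    (∃ K₁ : ℝ, ∀ x, dX (g (f x)) x ≤ K₁) ∧ (∃ K₂ : ℝ, ∀ y, dY (f (g y)) y ≤ K₂)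

/-- The additive group `ℤ[1/2]` of dyadic rationals, as an additive subgroup of `ℚ`. -/
def DyadicSubgroup : AddSubgroup ℚ where
  carrier := {q : ℚ | ∃ (m : ℤ) (k : ℕ), q = (m : ℚ) / 2 ^ k}
  zero_mem' := ⟨0, 0, by norm_num⟩
  add_mem' := by
    rintro a b ⟨m, k, rfl⟩ ⟨m', k', rfl⟩
    refine ⟨m * 2 ^ k' + m' * 2 ^ k, k + k', ?_⟩
    push_cast
    rw [div_add_div _ _ (by positivity) (by positivity), pow_add]
    ring_nf
  neg_mem' := by
    rintro a ⟨m, k, rfl⟩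
    exact ⟨-m, k, by push_cast; ring⟩

/-- The subgroup of integers inside `ℤ[1/2]`. -/
def IntSub : AddSubgroup DyadicSubgroup where
  carrier := {x | ∃ m : ℤ, (x : ℚ) = (m : ℚ)}
  zero_mem' := ⟨0, by norm_num⟩
  add_mem' := by
    rintro a b ⟨m, hm⟩ ⟨m', hm'⟩
    exact ⟨m + m', by push_cast [hm, hm']; ring⟩
  neg_mem' := by
    rintro a ⟨m, hm⟩
    exact ⟨-m, by push_cast [hm]; ring⟩

/-- The Prüfer 2-group `ℤ(2^∞) = ℤ[1/2]/ℤ`. -/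
abbrev Prufer2 := DyadicSubgroup ⧸ IntSub

/-- The inclusion `ℤ → ℤ[1/2]`. -/
def intToDyadic (m : ℤ) : DyadicSubgroup := ⟨(m : ℚ), m, 0, by norm_num⟩

/-- The quotient map `ℤ[1/2] → ℤ(2^∞)`. -/
def toPrufer2 : DyadicSubgroup → Prufer2 := QuotientAddGroup.mk

/-! Measure a dyadic rational `q` by `|q| + log (den q)` and a class in `ℤ[1/2]/ℤ` by the
logarithm of the denominator of any representative; both are group norms with finite balls,
hence give proper invariant metrics. Every `x ∈ ℤ[1/2]` is uniquely `⌊x⌋ + r` with `r ∈ [0, 1)`,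
so `x ↦ (⌊x⌋, [x])` is a bijection onto `ℤ × ℤ(2^∞)`. It changes distances by at most `1`:
the denominator terms agree because `den` is invariant under integer translation, and
`⌊x⌋ - ⌊y⌋` differs from `x - y` by `fract y - fract x ∈ (-1, 1)`. -/

theorem IsCoarseEquiv.of_equiv_of_abs_sub_le {X Y : Type*} {dX : X → X → ℝ} {dY : Y → Y → ℝ}
    (e : X ≃ Y) (C : ℝ) (hX : ∀ x, dX x x = 0) (hY : ∀ y, dY y y = 0)
    (he : ∀ x x', |dY (e x) (e x') - dX x x'| ≤ C) : IsCoarseEquiv dX dY e := by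
  refine ⟨fun δ _ => ⟨δ + C, fun x x' h => ?_⟩, e.symm, fun δ _ => ⟨δ + C, fun y y' h => ?_⟩,
    ⟨0, fun x => by simp [hX]⟩, ⟨0, fun y => by simp [hY]⟩⟩
  · linarith [(abs_le.mp (he x x')).2]
  · have := (abs_le.mp (he (e.symm y) (e.symm y'))).1
    simp only [Equiv.apply_symm_apply] at this
    linarith

theorem AddGroupNorm.isProperInvAddMetric {G : Type*} [AddGroup G] (N : AddGroupNorm G)
    (hN : ∀ K : ℝ, {g | N g ≤ K}.Finite) : IsProperInvAddMetric fun x y => N (-x + y) := by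
  refine ⟨fun x y => apply_nonneg N _, fun x y => ?_, fun x y => ?_, fun x y z => ?_,
    fun g h₁ h₂ => ?_, fun x K => ?_⟩
  · rw [map_eq_zero_iff_eq_zero, neg_add_eq_zero]
  · show N (-x + y) = N (-y + x)
    rw [← map_neg_eq_map, neg_add_rev, neg_neg]
  · simpa [add_assoc] using map_add_le_add N (-x + y) (-y + z)
  · simp [neg_add_rev, add_assoc]
  · exact ((hN K).image (x + ·)).subset fun y hy => ⟨-x + y, hy, add_neg_cancel_left x y⟩

theorem IsProperInvAddMetric.comp_subtype {G : Type*} [AddGroup G] {d : G → G → ℝ}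
    (hd : IsProperInvAddMetric d) (H : AddSubgroup G) :
    IsProperInvAddMetric fun x y : H => d x y := by
  obtain ⟨hnonneg, hzero, hsymm, htriangle, hinv, hproper⟩ := hd
  exact ⟨fun x y => hnonneg x y, fun x y => (hzero x y).trans Subtype.ext_iff.symm,
    fun x y => hsymm x y, fun x y z => htriangle x y z, fun g h₁ h₂ => hinv g h₁ h₂,
    fun x K => (hproper x K).preimage Subtype.val_injective.injOn⟩

theorem Int.abs_abs_floor_sub_floor_sub_abs_sub_le_one {R : Type*} [Field R] [LinearOrder R]
    [IsStrictOrderedRing R] [FloorRing R] (a b : R) :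
    |(|((⌊a⌋ - ⌊b⌋ : ℤ) : R)| - |a - b|)| ≤ 1 := by
  refine (abs_abs_sub_abs_le_abs_sub _ _).trans (abs_le.mpr ⟨?_, ?_⟩) <;>
  · push_cast
    linarith [Int.floor_le a, Int.lt_floor_add_one a, Int.floor_le b, Int.lt_floor_add_one b]

namespace Rat

noncomputable def logDenSeminorm : AddGroupSeminorm ℚ where
  toFun q := Real.log q.den
  map_zero' := by simp
  add_le' q r := by
    rw [← Real.log_mul (by positivity) (by positivity)]
    exact Real.log_le_log (by positivity)
      (mod_cast Nat.le_of_dvd (by positivity) (add_den_dvd q r))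
  neg' q := by simp

theorem logDenSeminorm_apply (q : ℚ) : logDenSeminorm q = Real.log q.den := rfl

theorem logDenSeminorm_add_intCast (q : ℚ) (n : ℤ) :
    logDenSeminorm (q + n) = logDenSeminorm q := by
  rw [logDenSeminorm_apply, logDenSeminorm_apply, add_intCast_den]

theorem logDenSeminorm_eq_zero_iff {q : ℚ} : logDenSeminorm q = 0 ↔ q.den = 1 := by
  rw [logDenSeminorm_apply, Real.log_eq_zero]
  have := q.den_pos
  constructor
  · rintro (h | h | h) <;> norm_cast at h
    omega
  · intro h
    exact Or.inr (Or.inl (mod_cast h))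

theorem finite_setOf_abs_le_logDenSeminorm_le (A K : ℝ) :
    {q : ℚ | |(q : ℝ)| ≤ A ∧ logDenSeminorm q ≤ K}.Finite := by
  set D := Real.exp K
  have hbox : ((Set.Icc (-⌈A * D⌉) ⌈A * D⌉).prod (Set.Iic ⌊D⌋₊)).Finite :=
    (Set.finite_Icc _ _).prod (Set.finite_Iic _)
  refine Set.Finite.of_finite_image (f := fun q : ℚ => (q.num, q.den)) (hbox.subset ?_)
    fun q _ r _ h => Rat.ext (congrArg Prod.fst h) (congrArg Prod.snd h)
  rintro _ ⟨q, ⟨hA, hK⟩, rfl⟩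
  have hden : (q.den : ℝ) ≤ D :=
    (Real.log_le_iff_le_exp (by positivity)).mp hK
  have hnum : |(q.num : ℝ)| ≤ A * D := by
    rw [← Rat.cast_intCast, ← q.mul_den_eq_num]
    push_cast
    rw [abs_mul, Nat.abs_cast]
    exact mul_le_mul hA hden (by positivity) ((abs_nonneg _).trans hA)
  refine ⟨abs_le.mp ?_, Nat.le_floor hden⟩
  exact_mod_cast hnum.trans (Int.le_ceil _)

noncomputable def absAddLogDenNorm : AddGroupNorm ℚ where
  toFun q := |(q : ℝ)| + logDenSeminorm q
  map_zero' := by simp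
  add_le' q r := by
    push_cast
    linarith [abs_add_le (q : ℝ) r, map_add_le_add logDenSeminorm q r]
  neg' q := by simp
  eq_zero_of_map_eq_zero' q h := by
    have := apply_nonneg logDenSeminorm q
    have : |(q : ℝ)| = 0 := by linarith [abs_nonneg (q : ℝ)]
    exact_mod_cast abs_eq_zero.mp this

theorem absAddLogDenNorm_apply (q : ℚ) :
    absAddLogDenNorm q = |(q : ℝ)| + logDenSeminorm q := rfl

theorem finite_setOf_absAddLogDenNorm_le (K : ℝ) : {q | absAddLogDenNorm q ≤ K}.Finite :=
  (finite_setOf_abs_le_logDenSeminorm_le K K).subset fun q (hq : |(q : ℝ)| + _ ≤ K) =>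
    ⟨by linarith [apply_nonneg logDenSeminorm q], by linarith [abs_nonneg (q : ℝ)]⟩

end Rat

theorem out_toPrufer2 (p : Prufer2) : toPrufer2 p.out = p := QuotientAddGroup.out_eq' p

theorem toPrufer2_surjective : Function.Surjective toPrufer2 :=
  fun p => ⟨p.out, out_toPrufer2 p⟩

theorem toPrufer2_add (x y : DyadicSubgroup) :
    toPrufer2 (x + y) = toPrufer2 x + toPrufer2 y := rfl

theorem toPrufer2_neg (x : DyadicSubgroup) : toPrufer2 (-x) = -toPrufer2 x := rfl

theorem toPrufer2_intToDyadic (m : ℤ) : toPrufer2 (intToDyadic m) = 0 :=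
  (QuotientAddGroup.eq_zero_iff _).mpr ⟨m, rfl⟩

theorem fract_eq_of_toPrufer2_eq {x y : DyadicSubgroup} (h : toPrufer2 x = toPrufer2 y) :
    Int.fract (y : ℚ) = Int.fract (x : ℚ) := by
  obtain ⟨n, hn⟩ := QuotientAddGroup.eq.mp h
  rw [show (y : ℚ) = x + n by rw [← hn]; push_cast; ring, Int.fract_add_intCast]

def dyadicFract (x : DyadicSubgroup) : DyadicSubgroup := x - intToDyadic ⌊(x : ℚ)⌋

theorem coe_dyadicFract (x : DyadicSubgroup) : (dyadicFract x : ℚ) = Int.fract (x : ℚ) := rfl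

theorem toPrufer2_dyadicFract (x : DyadicSubgroup) : toPrufer2 (dyadicFract x) = toPrufer2 x := by
  rw [dyadicFract, sub_eq_add_neg, toPrufer2_add, toPrufer2_neg, toPrufer2_intToDyadic, neg_zero,
    add_zero]

noncomputable def dyadicEquivIntProdPrufer2 : DyadicSubgroup ≃ ℤ × Prufer2 where
  toFun x := (⌊(x : ℚ)⌋, toPrufer2 x)
  invFun a := intToDyadic a.1 + dyadicFract a.2.out
  left_inv x := by
    apply Subtype.ext
    have : toPrufer2 x = toPrufer2 (toPrufer2 x).out := (out_toPrufer2 _).symm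
    simp only [AddSubgroup.coe_add, coe_dyadicFract, fract_eq_of_toPrufer2_eq this]
    exact Int.floor_add_fract _
  right_inv a := by
    obtain ⟨m, p⟩ := a
    refine Prod.ext ?_ ?_
    · show ⌊(m : ℚ) + Int.fract (p.out : ℚ)⌋ = m
      rw [Int.floor_intCast_add, Int.floor_fract, add_zero]
    · show toPrufer2 (intToDyadic m + dyadicFract p.out) = p
      rw [toPrufer2_add, toPrufer2_intToDyadic, toPrufer2_dyadicFract, zero_add, out_toPrufer2]

theorem dyadicEquivIntProdPrufer2_apply (x : DyadicSubgroup) :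
    dyadicEquivIntProdPrufer2 x = (⌊(x : ℚ)⌋, toPrufer2 x) := rfl

noncomputable def prufer2Norm : AddGroupNorm Prufer2 where
  toFun p := Quotient.liftOn' p (fun x => Rat.logDenSeminorm x) fun x y h => by
    obtain ⟨n, hn⟩ := QuotientAddGroup.leftRel_apply.mp h
    rw [show (y : ℚ) = x + n by rw [← hn]; push_cast; ring, Rat.logDenSeminorm_add_intCast]
  map_zero' := map_zero Rat.logDenSeminorm
  add_le' p q := by
    obtain ⟨x, rfl⟩ := toPrufer2_surjective p
    obtain ⟨y, rfl⟩ := toPrufer2_surjective q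
    exact map_add_le_add Rat.logDenSeminorm (x : ℚ) y
  neg' p := by
    obtain ⟨x, rfl⟩ := toPrufer2_surjective p
    exact map_neg_eq_map Rat.logDenSeminorm (x : ℚ)
  eq_zero_of_map_eq_zero' p h := by
    obtain ⟨x, rfl⟩ := toPrufer2_surjective p
    have hx := (Rat.den_eq_one_iff _).mp (Rat.logDenSeminorm_eq_zero_iff.mp h)
    exact (QuotientAddGroup.eq_zero_iff x).mpr ⟨_, hx.symm⟩

theorem prufer2Norm_toPrufer2 (x : DyadicSubgroup) :
    prufer2Norm (toPrufer2 x) = Rat.logDenSeminorm x := rfl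

theorem finite_setOf_prufer2Norm_le (K : ℝ) : {p | prufer2Norm p ≤ K}.Finite := by
  refine (((Rat.finite_setOf_abs_le_logDenSeminorm_le 1 K).preimage
    Subtype.val_injective.injOn).image toPrufer2).subset fun p hp => ?_
  refine ⟨dyadicFract p.out, ⟨?_, ?_⟩, by rw [toPrufer2_dyadicFract, out_toPrufer2]⟩
  · rw [coe_dyadicFract, Rat.cast_fract, abs_of_nonneg (Int.fract_nonneg _)]
    exact (Int.fract_lt_one _).le
  · rwa [← prufer2Norm_toPrufer2, toPrufer2_dyadicFract, out_toPrufer2]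

noncomputable def dyadicDist (x y : DyadicSubgroup) : ℝ := Rat.absAddLogDenNorm (-(x : ℚ) + y)

noncomputable def prufer2Dist (p q : Prufer2) : ℝ := prufer2Norm (-p + q)

theorem isProperInvAddMetric_dyadicDist : IsProperInvAddMetric dyadicDist :=
  (Rat.absAddLogDenNorm.isProperInvAddMetric Rat.finite_setOf_absAddLogDenNorm_le).comp_subtype
    DyadicSubgroup

theorem isProperInvAddMetric_prufer2Dist : IsProperInvAddMetric prufer2Dist :=
  prufer2Norm.isProperInvAddMetric finite_setOf_prufer2Norm_le

theorem abs_dist_dyadicEquivIntProdPrufer2_sub_dyadicDist_le_one (x y : DyadicSubgroup) :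
    |(|(((dyadicEquivIntProdPrufer2 x).1 : ℤ) : ℝ) - (dyadicEquivIntProdPrufer2 y).1|
        + prufer2Dist (dyadicEquivIntProdPrufer2 x).2 (dyadicEquivIntProdPrufer2 y).2)
      - dyadicDist x y| ≤ 1 := by
  have hP : prufer2Dist (toPrufer2 x) (toPrufer2 y) = Rat.logDenSeminorm (-(x : ℚ) + y) := rfl
  have hfloor := Int.abs_abs_floor_sub_floor_sub_abs_sub_le_one ((x : ℚ) : ℝ) ((y : ℚ) : ℝ)
  rw [Rat.floor_cast, Rat.floor_cast, Int.cast_sub] at hfloor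
  rw [dyadicEquivIntProdPrufer2_apply, dyadicEquivIntProdPrufer2_apply, hP, dyadicDist,
    Rat.absAddLogDenNorm_apply, add_sub_add_right_eq_sub, neg_add_eq_sub, Rat.cast_sub,
    abs_sub_comm ((y : ℚ) : ℝ)]
  exact hfloor

/-- The exact sequence `0 → ℤ → ℤ[1/2] → ℤ(2^∞) → 0` coarsely splits, with `ℤ` carrying
its standard word metric. -/
theorem stmt6 :
    ∃ (dD : DyadicSubgroup → DyadicSubgroup → ℝ) (dP : Prufer2 → Prufer2 → ℝ),
      IsProperInvAddMetric dD ∧ IsProperInvAddMetric dP ∧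
      ∃ f : DyadicSubgroup → ℤ × Prufer2,
        IsCoarseEquiv dD
          (fun p q => |((p.1 : ℝ)) - ((q.1 : ℝ))| + dP p.2 q.2) f ∧
        (∀ m : ℤ, f (intToDyadic m) = (m, 0)) ∧
        ∀ x : DyadicSubgroup, (f x).2 = toPrufer2 x := by
  refine ⟨dyadicDist, prufer2Dist, isProperInvAddMetric_dyadicDist,
    isProperInvAddMetric_prufer2Dist, dyadicEquivIntProdPrufer2, ?_,
    fun m => Prod.ext (Int.floor_intCast m) (toPrufer2_intToDyadic m), fun x => rfl⟩
  exact IsCoarseEquiv.of_equiv_of_abs_sub_le _ 1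
    (fun x => (isProperInvAddMetric_dyadicDist.2.1 x x).mpr rfl)
    (fun a => by simp [isProperInvAddMetric_prufer2Dist.2.1])
    abs_dist_dyadicEquivIntProdPrufer2_sub_dyadicDist_le_one
end

section
/- A countable group G with a proper left invariant metric is locally finite if and only if its growth type is at most a constant function, i.e. there is C > 0 such that for every s > 0 and every g ∈ G, the growth function n ↦ #(A_g^{(n,s)}) is bounded by a fixed constant type (gr_{(s,g)} ⪯ 1). -/
/-- The `(n,s)`-connected component of `x`: points reachable from `x` by an `s`-scale
chain of length `n`. -/
def reachSet {X : Type*} (d : X → X → ℝ) (s : ℝ) (n : ℕ) (x : X) : Set X :=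
  {y | ∃ c : ℕ → X, c 0 = x ∧ c n = y ∧ ∀ i < n, d (c i) (c (i + 1)) ≤ s}

/-- `(X, d)` has growth type at most `f` : every growth function
`n ↦ #(A_x^{(n,s)})` satisfies `gr ⪯ f`, i.e. `gr n ≤ C * f (C * n)` for large `n`. -/
def GrowthTypeAtMost {X : Type*} (d : X → X → ℝ) (f : ℕ → ℕ) : Prop :=
  ∀ s : ℝ, 0 < s → ∀ x : X, ∃ C : ℕ, 0 < C ∧ ∃ N : ℕ, ∀ n, N ≤ n →
    (reachSet d s n x).ncard ≤ C * f (C * n)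

theorem Set.finite_iUnion_of_monotone_of_ncard_le {α : Type*} {f : ℕ → Set α} (hf : Monotone f)
    (hfin : ∀ n, (f n).Finite) {C N : ℕ} (hC : ∀ n, N ≤ n → (f n).ncard ≤ C) :
    (⋃ n, f n).Finite := by
  by_contra hinf
  obtain ⟨t, ht, htfin, htcard⟩ := Set.Infinite.exists_subset_ncard_eq hinf (C + 1)
  obtain ⟨m, hm⟩ := hf.directed_le.exists_mem_subset_of_finset_subset_biUnion
    (s := htfin.toFinset) (by rwa [htfin.coe_toFinset])
  rw [htfin.coe_toFinset] at hm
  have hle : t.ncard ≤ (f (max m N)).ncard :=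
    Set.ncard_le_ncard (hm.trans (hf (le_max_left m N))) (hfin _)
  have := hC (max m N) (le_max_right m N)
  omega

section reachSet

variable {X : Type*} {d : X → X → ℝ} {s : ℝ}

@[simp]
theorem reachSet_zero (x : X) : reachSet d s 0 x = {x} := by
  ext y
  constructor
  · rintro ⟨c, hc0, rfl, -⟩
    exact hc0
  · rintro rfl
    exact ⟨fun _ => y, rfl, rfl, by simp⟩

theorem mem_reachSet_succ {n : ℕ} {x y : X} :
    y ∈ reachSet d s (n + 1) x ↔ ∃ z ∈ reachSet d s n x, d z y ≤ s := by
  constructor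
  · rintro ⟨c, hc0, rfl, hc⟩
    exact ⟨c n, ⟨c, hc0, rfl, fun i hi => hc i (by omega)⟩, hc n (by omega)⟩
  · rintro ⟨z, ⟨c, hc0, rfl, hc⟩, hzy⟩
    refine ⟨Function.update c (n + 1) y, by simpa using hc0, by simp, fun i hi => ?_⟩
    rcases Nat.lt_succ_iff_lt_or_eq.mp hi with hi | rfl
    · simpa [Function.update_of_ne (show i ≠ n + 1 by omega),
        Function.update_of_ne (show i + 1 ≠ n + 1 by omega)] using hc i hi
    · simpa using hzy

theorem reachSet_finite (hfin : ∀ z, {y | d z y ≤ s}.Finite) (n : ℕ) (x : X) :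
    (reachSet d s n x).Finite := by
  induction n with
  | zero => simp
  | succ n ih =>
    refine (ih.biUnion fun z _ => hfin z).subset fun y hy => ?_
    obtain ⟨z, hz, hzy⟩ := mem_reachSet_succ.mp hy
    exact Set.mem_biUnion hz hzy

theorem monotone_reachSet (hs : ∀ z, d z z ≤ s) (x : X) :
    Monotone fun n => reachSet d s n x :=
  monotone_nat_of_le_succ fun _ y hy => mem_reachSet_succ.mpr ⟨y, hy, hs y⟩

end reachSet

section Group

open scoped Pointwise

variable {G : Type*} [Group G] {d : G → G → ℝ} {s : ℝ}

theorem reachSet_subset_smul_closure (hinv : ∀ g h₁ h₂, d (g * h₁) (g * h₂) = d h₁ h₂)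
    (n : ℕ) (x : G) :
    reachSet d s n x ⊆ x • (Subgroup.closure {t | d 1 t ≤ s} : Set G) := by
  induction n with
  | zero => simpa using Set.mem_smul_set.mpr ⟨1, one_mem _, mul_one x⟩
  | succ n ih =>
    intro y hy
    obtain ⟨z, hz, hzy⟩ := mem_reachSet_succ.mp hy
    obtain ⟨a, ha, hza⟩ := Set.mem_smul_set.mp (ih hz)
    have hstep : d 1 (z⁻¹ * y) ≤ s := by rwa [← hinv z, mul_one, mul_inv_cancel_left]
    refine Set.mem_smul_set.mpr ⟨a * (z⁻¹ * y), mul_mem ha (Subgroup.subset_closure hstep), ?_⟩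
    rw [smul_eq_mul, ← mul_assoc, ← smul_eq_mul x a, hza, mul_inv_cancel_left]

theorem mul_mem_reachSet_succ (hinv : ∀ g h₁ h₂, d (g * h₁) (g * h₂) = d h₁ h₂) {n : ℕ}
    {x y t : G} (hy : y ∈ reachSet d s n x) (ht : d 1 t ≤ s) :
    y * t ∈ reachSet d s (n + 1) x :=
  mem_reachSet_succ.mpr ⟨y, hy, by simpa only [mul_one] using (hinv y 1 t).trans_le ht⟩

theorem closure_subset_iUnion_reachSet (hinv : ∀ g h₁ h₂, d (g * h₁) (g * h₂) = d h₁ h₂)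
    {S : Set G} (hS : ∀ t ∈ S, d 1 t ≤ s ∧ d 1 t⁻¹ ≤ s) :
    (Subgroup.closure S : Set G) ⊆ ⋃ n, reachSet d s n 1 := by
  intro y hy
  simp only [Set.mem_iUnion]
  induction hy using Subgroup.closure_induction_right with
  | one => exact ⟨0, by simp⟩
  | mul_right y _ t ht ih =>
    obtain ⟨n, hn⟩ := ih
    exact ⟨n + 1, mul_mem_reachSet_succ hinv hn (hS t ht).1⟩
  | mul_inv_cancel y _ t ht ih =>
    obtain ⟨n, hn⟩ := ih
    exact ⟨n + 1, mul_mem_reachSet_succ hinv hn (hS t ht).2⟩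

theorem ncard_reachSet_le (hinv : ∀ g h₁ h₂, d (g * h₁) (g * h₂) = d h₁ h₂)
    (hfin : (Subgroup.closure {t | d 1 t ≤ s} : Set G).Finite) (n : ℕ) (x : G) :
    (reachSet d s n x).ncard ≤ (Subgroup.closure {t | d 1 t ≤ s} : Set G).ncard :=
  (Set.ncard_le_ncard (reachSet_subset_smul_closure hinv n x) hfin.smul_set).trans_eq
    (Set.ncard_smul_set x _)

end Group

theorem stmt8_general {G : Type*} [Group G] (d : G → G → ℝ)
    (hd : IsProperLeftInvMetric d) :
    (∀ S : Finset G, ((Subgroup.closure (S : Set G)) : Set G).Finite) ↔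
      GrowthTypeAtMost d (fun _ => 1) := by
  obtain ⟨-, hself, -, -, hinv, hproper⟩ := hd
  constructor
  · intro hlf s _ x
    have hH := hlf (hproper 1 s).toFinset
    rw [Set.Finite.coe_toFinset] at hH
    refine ⟨(Subgroup.closure {t | d 1 t ≤ s} : Set G).ncard + 1, Nat.succ_pos _, 0,
      fun n _ => ?_⟩
    simpa only [mul_one] using (ncard_reachSet_le hinv hH n x).trans (Nat.le_succ _)
  · intro hg S
    obtain ⟨s, hs, hS⟩ : ∃ s > 0, ∀ t ∈ (S : Set G), d 1 t ≤ s ∧ d 1 t⁻¹ ≤ s := by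
      obtain ⟨b, hb⟩ := (S.finite_toSet.union S.finite_toSet.inv).image (d 1) |>.bddAbove
      exact ⟨max b 1, lt_max_of_lt_right one_pos, fun t ht =>
        ⟨le_max_of_le_left (hb ⟨t, Or.inl ht, rfl⟩),
          le_max_of_le_left (hb ⟨t⁻¹, Or.inr (by simpa using ht), rfl⟩)⟩⟩
    obtain ⟨C, -, N, hN⟩ := hg s hs 1
    have hmono := monotone_reachSet (fun z => ((hself z z).2 rfl).trans_le hs.le) (1 : G)
    have hbounded : ∀ n, N ≤ n → (reachSet d s n 1).ncard ≤ C := by simpa using hN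
    exact (Set.finite_iUnion_of_monotone_of_ncard_le hmono (reachSet_finite (hproper · s) · 1)
      hbounded).subset (closure_subset_iUnion_reachSet hinv hS)

/-- A countable group with a proper left invariant metric is locally finite iff its growth
type is at most a constant function. -/
theorem stmt8 {G : Type*} [Group G] [Countable G] (d : G → G → ℝ)
    (hd : IsProperLeftInvMetric d) :
    (∀ S : Finset G, ((Subgroup.closure (S : Set G)) : Set G).Finite) ↔
      GrowthTypeAtMost d (fun _ => 1) :=
  stmt8_general d hd
end

section
/- Let (G, d_G) be a countable group with a proper left invariant metric and f : ℕ → ℕ a function. If every finitely generated subgroup H of G has growth type at most f (with respect to the restricted metric), then G has growth type at most f. -/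
/-!
Given a scale `s` and a base point `x`, the subgroup `H` generated by `x` and the ball
`{g | d 1 g ≤ s}` is finitely generated, because the metric is proper. By left invariance a
step of length at most `s` from a point of `H` is multiplication by an element of that ball,
so every `s`-chain starting at `x` stays in `H`. Hence the `(n, s)`-component of `x` in `G`
is the same set as its `(n, s)`-component in `H`, and the growth bound for `H` transfers.
-/

theorem reachSet_eq_image_subtype {X : Type*} {d : X → X → ℝ} {s : ℝ} {P : Set X}
    (hP : ∀ a b, a ∈ P → d a b ≤ s → b ∈ P) (n : ℕ) {x : X} (hx : x ∈ P) :
    reachSet d s n x = Subtype.val '' reachSet (fun a b : P => d a b) s n ⟨x, hx⟩ := by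
  ext y
  constructor
  · rintro ⟨c, hc0, hcn, hcs⟩
    have hcP : ∀ i ≤ n, c i ∈ P := by
      intro i
      induction i with
      | zero => exact fun _ => hc0 ▸ hx
      | succ k ih => exact fun hk => hP _ _ (ih (by omega)) (hcs k hk)
    refine ⟨⟨y, hcn ▸ hcP n le_rfl⟩,
      ⟨fun i => ⟨c (min i n), hcP _ (min_le_right i n)⟩, ?_, ?_, fun i hi => ?_⟩, rfl⟩
    · simp [hc0]
    · simp [hcn]
    · simpa only [min_eq_left hi.le, min_eq_left (Nat.succ_le_of_lt hi)] using hcs i hi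
  · rintro ⟨y, ⟨c, hc0, hcn, hcs⟩, rfl⟩
    exact ⟨fun i => c i, congrArg Subtype.val hc0, congrArg Subtype.val hcn, hcs⟩

theorem Subgroup.mem_of_dist_le {G : Type*} [Group G] {d : G → G → ℝ}
    (hinv : ∀ g h₁ h₂, d (g * h₁) (g * h₂) = d h₁ h₂) {H : Subgroup G} {s : ℝ}
    (hball : {g | d 1 g ≤ s} ⊆ H) {a b : G} (ha : a ∈ H) (hab : d a b ≤ s) : b ∈ H := by
  have hstep : d 1 (a⁻¹ * b) ≤ s := by
    rwa [← hinv a, mul_one, mul_inv_cancel_left]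
  simpa only [mul_inv_cancel_left] using H.mul_mem ha (hball hstep)

theorem stmt9_general {G : Type*} [Group G] (d : G → G → ℝ)
    (hd : IsProperLeftInvMetric d) (f : ℕ → ℕ)
    (hsub : ∀ H : Subgroup G, H.FG →
      GrowthTypeAtMost (fun x y : H => d (x : G) (y : G)) f) :
    GrowthTypeAtMost d f := by
  obtain ⟨-, -, -, -, hinv, hproper⟩ := hd
  intro s hs x
  let H := Subgroup.closure ({g | d 1 g ≤ s} ∪ {x})
  have hFG : H.FG := (Subgroup.fg_iff H).2 ⟨_, rfl, (hproper 1 s).union (Set.finite_singleton x)⟩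
  have hxH : x ∈ H := Subgroup.subset_closure (Or.inr rfl)
  have hclosed : ∀ a b, a ∈ (H : Set G) → d a b ≤ s → b ∈ (H : Set G) := fun _ _ =>
    H.mem_of_dist_le hinv (Set.subset_union_left.trans Subgroup.subset_closure)
  obtain ⟨C, hC, N, hN⟩ := hsub H hFG s hs ⟨x, hxH⟩
  refine ⟨C, hC, N, fun n hn => ?_⟩
  rw [reachSet_eq_image_subtype hclosed n hxH, Set.ncard_image_of_injective _ Subtype.val_injective]
  exact hN n hn

/-- If every finitely generated subgroup of `G` has growth type at most `f` (with the
restricted metric), then `G` has growth type at most `f`. -/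
theorem stmt9 {G : Type*} [Group G] [Countable G] (d : G → G → ℝ)
    (hd : IsProperLeftInvMetric d) (f : ℕ → ℕ)
    (hsub : ∀ H : Subgroup G, H.FG →
      GrowthTypeAtMost (fun x y : H => d (x : G) (y : G)) f) :
    GrowthTypeAtMost d f :=
  stmt9_general d hd f hsub
end

section
/- Let (G, d_G) and (H, d_H) be countable groups with proper left invariant metrics, let f : ℕ → ℕ, and suppose G has growth type at most f. If there exists a coarse embedding φ : H → G, then H has growth type at most f. -/
/-!
A map that sends `s`-chains to `ε`-chains carries the reach set `A_x^{(n,s)}` of `H` into the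
reach set `A_{φ x}^{(n,ε)}` of `G`, and a coarse embedding of a proper left invariant metric
group has fibres of uniformly bounded size `M` (each fibre lies in a ball of fixed radius).
Hence `#A_x^{(n,s)} ≤ M · #A_{φ x}^{(Mn,ε)} ≤ M · C f(C M n)`; counting `M n` rather than `n`
steps in `G` is what lets the constant in front and inside `f` agree without `f` monotone.
-/

open Set

theorem Set.encard_preimage_le_mul {α β : Type*} {f : α → β} {t : Set β} (ht : t.Finite)
    {M : ℕ} (hM : ∀ b ∈ t, (f ⁻¹' {b}).encard ≤ M) :
    (f ⁻¹' t).encard ≤ (t.ncard * M : ℕ) :=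
  calc (f ⁻¹' t).encard = (⋃ b ∈ ht.toFinset, f ⁻¹' {b}).encard := by
        simp only [Finite.mem_toFinset, biUnion_preimage_singleton]
    _ ≤ ∑ b ∈ ht.toFinset, (f ⁻¹' {b}).encard := Finset.set_encard_biUnion_le _ _
    _ ≤ ∑ _b ∈ ht.toFinset, (M : ℕ∞) := Finset.sum_le_sum fun b hb => hM b (by simpa using hb)
    _ = (t.ncard * M : ℕ) := by simp [ncard_eq_toFinset_card t ht]

section reachSet

variable {X Y : Type*} {dX : X → X → ℝ} {dY : Y → Y → ℝ}

lemma reachSet_subset_ball (tri : ∀ x y z, dX x z ≤ dX x y + dX y z)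
    (refl : ∀ x, dX x x = 0) (s : ℝ) (n : ℕ) (x : X) :
    reachSet dX s n x ⊆ {y | dX x y ≤ n * s} := by
  rintro y ⟨c, rfl, rfl, hstep⟩
  induction n with
  | zero => simp [refl]
  | succ k ih =>
    calc dX (c 0) (c (k + 1)) ≤ dX (c 0) (c k) + dX (c k) (c (k + 1)) := tri _ _ _
      _ ≤ k * s + s := add_le_add (ih fun i hi => hstep i (by omega)) (hstep k (by omega))
      _ = (k + 1 : ℕ) * s := by push_cast; ring

lemma reachSet_mono (refl : ∀ x, dX x x = 0) {s : ℝ} (hs : 0 ≤ s) {n m : ℕ} (hnm : n ≤ m)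
    (x : X) : reachSet dX s n x ⊆ reachSet dX s m x := by
  rintro y ⟨c, h0, hn, hstep⟩
  refine ⟨fun i => c (min i n), by simpa using h0, by simpa [min_eq_right hnm] using hn, ?_⟩
  intro i _
  rcases lt_or_ge i n with h | h
  · simpa [min_eq_left h.le, min_eq_left (Nat.succ_le_of_lt h)] using hstep i h
  · simpa [min_eq_right h, min_eq_right (h.trans (Nat.le_succ i)), refl] using hs

lemma image_reachSet_subset {φ : X → Y} {s t : ℝ} (hφ : ∀ a b, dX a b ≤ s → dY (φ a) (φ b) ≤ t)
    (n : ℕ) (x : X) : φ '' reachSet dX s n x ⊆ reachSet dY t n (φ x) := by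
  rintro _ ⟨y, ⟨c, rfl, rfl, hstep⟩, rfl⟩
  exact ⟨φ ∘ c, rfl, rfl, fun i hi => hφ _ _ (hstep i hi)⟩

theorem GrowthTypeAtMost.of_bornologous_of_encard_fiber_le {f : ℕ → ℕ}
    (hY : GrowthTypeAtMost dY f) (reflY : ∀ y, dY y y = 0)
    (finiteY : ∀ t n y, (reachSet dY t n y).Finite) (φ : X → Y)
    (hφ : ∀ s : ℝ, 0 < s → ∃ ε : ℝ, ∀ a b, dX a b ≤ s → dY (φ a) (φ b) ≤ ε)
    (M : ℕ) (hM : ∀ y, (φ ⁻¹' {y}).encard ≤ M) :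
    GrowthTypeAtMost dX f := by
  intro s hs x
  obtain ⟨ε, hε⟩ := hφ s hs
  have ht : (0 : ℝ) < max ε 1 := lt_max_of_lt_right one_pos
  obtain ⟨C, hC, N, hN⟩ := hY (max ε 1) ht (φ x)
  refine ⟨(M + 1) * C, by positivity, N, fun n hn => ?_⟩
  have hMn : n ≤ (M + 1) * n := Nat.le_mul_of_pos_left n M.succ_pos
  set R := reachSet dY (max ε 1) ((M + 1) * n) (φ x)
  have hsub : reachSet dX s n x ⊆ φ ⁻¹' R :=
    image_subset_iff.mp <| (image_reachSet_subset (fun a b h => (hε a b h).trans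
      (le_max_left ε 1)) n x).trans (reachSet_mono reflY ht.le hMn (φ x))
  have hcard : (reachSet dX s n x).ncard ≤ R.ncard * (M + 1) :=
    (encard_le_coe_iff_finite_ncard_le.mp <| (encard_le_encard hsub).trans <|
      encard_preimage_le_mul (finiteY _ _ _) fun y _ =>
        (hM y).trans (by exact_mod_cast M.le_succ)).2
  calc (reachSet dX s n x).ncard ≤ R.ncard * (M + 1) := hcard
    _ ≤ C * f (C * ((M + 1) * n)) * (M + 1) := Nat.mul_le_mul_right _ (hN _ (hn.trans hMn))
    _ = (M + 1) * C * f ((M + 1) * C * n) := by ring_nf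

end reachSet

namespace IsProperLeftInvMetric

variable {G : Type*} [Group G] {d : G → G → ℝ}

lemma dist_self (hd : IsProperLeftInvMetric d) (x : G) : d x x = 0 := (hd.2.1 x x).2 rfl

lemma finite_reachSet (hd : IsProperLeftInvMetric d) (s : ℝ) (n : ℕ) (x : G) :
    (reachSet d s n x).Finite :=
  (hd.2.2.2.2.2 x _).subset (reachSet_subset_ball hd.2.2.2.1 hd.dist_self s n x)

lemma ball_eq_image_mul_left (hd : IsProperLeftInvMetric d) (x : G) (S : ℝ) :
    {y | d x y ≤ S} = (x * ·) '' {y | d 1 y ≤ S} := by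
  ext y
  have hy := hd.2.2.2.2.1 x 1 (x⁻¹ * y)
  rw [mul_one, mul_inv_cancel_left] at hy
  exact ⟨fun h => ⟨x⁻¹ * y, by simpa [← hy] using h, mul_inv_cancel_left x y⟩,
    by rintro ⟨z, hz, rfl⟩; simpa [← hd.2.2.2.2.1 x 1 z] using hz⟩

lemma exists_encard_fiber_le (hd : IsProperLeftInvMetric d) {Y : Type*} {φ : G → Y} {S : ℝ}
    (hS : ∀ a b, φ a = φ b → d a b ≤ S) : ∃ M : ℕ, ∀ y, (φ ⁻¹' {y}).encard ≤ M := by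
  refine ⟨{y | d 1 y ≤ S}.ncard, fun y => ?_⟩
  rcases (φ ⁻¹' {y}).eq_empty_or_nonempty with h | ⟨a, ha⟩
  · simp [h]
  calc (φ ⁻¹' {y}).encard ≤ {b | d a b ≤ S}.encard :=
        encard_le_encard fun b hb => hS a b (ha.trans hb.symm)
    _ = {b | d 1 b ≤ S}.encard := by
        rw [hd.ball_eq_image_mul_left, (mul_right_injective a).encard_image]
    _ = _ := (hd.2.2.2.2.2 1 S).cast_ncard_eq.symm

end IsProperLeftInvMetric

theorem stmt10_general {G H : Type*} [Group G] [Group H]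
    (dG : G → G → ℝ) (dH : H → H → ℝ)
    (hdG : IsProperLeftInvMetric dG) (hdH : IsProperLeftInvMetric dH)
    (f : ℕ → ℕ) (hG : GrowthTypeAtMost dG f)
    (φ : H → G)
    (hφ₁ : ∀ δ : ℝ, 0 < δ → ∃ ε : ℝ, ∀ x y, dH x y ≤ δ → dG (φ x) (φ y) ≤ ε)
    (hφ₂ : ∀ R : ℝ, 0 < R → ∃ S : ℝ, ∀ x y, dG (φ x) (φ y) ≤ R → dH x y ≤ S) :
    GrowthTypeAtMost dH f := by
  obtain ⟨S, hS⟩ := hφ₂ 1 one_pos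
  obtain ⟨M, hM⟩ := hdH.exists_encard_fiber_le (φ := φ) (S := S) fun a b h =>
    hS a b (by rw [h, hdG.dist_self]; exact zero_le_one)
  exact hG.of_bornologous_of_encard_fiber_le hdG.dist_self hdG.finite_reachSet φ hφ₁ M hM

/-- Growth type is monotone under coarse embeddings. -/
theorem stmt10 {G H : Type*} [Group G] [Group H] [Countable G] [Countable H]
    (dG : G → G → ℝ) (dH : H → H → ℝ)
    (hdG : IsProperLeftInvMetric dG) (hdH : IsProperLeftInvMetric dH)
    (f : ℕ → ℕ) (hG : GrowthTypeAtMost dG f)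
    (φ : H → G)
    (hφ₁ : ∀ δ : ℝ, 0 < δ → ∃ ε : ℝ, ∀ x y, dH x y ≤ δ → dG (φ x) (φ y) ≤ ε)
    (hφ₂ : ∀ R : ℝ, 0 < R → ∃ S : ℝ, ∀ x y, dG (φ x) (φ y) ≤ R → dH x y ≤ S) :
    GrowthTypeAtMost dH f :=
  stmt10_general dG dH hdG hdH f hG φ hφ₁ hφ₂
end

section
/- Let (G, H) be an odd pair of countable abelian groups. Then the exact sequence 0 → H → G → G/H → 0 coarsely splits: there exist proper left invariant metrics d_H, d_G, d_{G/H} and a coarse equivalence f : (G, d_G) → (H ⊕ G/H, d_H ⊕ d_{G/H}) such that f restricted to H is the inclusion h ↦ (h, 0) and the composition of f with projection H ⊕ G/H → G/H equals the quotient map π : G → G/H. -/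
/-!
The quotient `G ⧸ H` is a countable torsion group, hence the increasing union of finite
subgroups `K n`. Choosing coset representatives level by level gives a section `s` of
`G → G ⧸ H` with `s 0 = 0` whose defects `s (q + r) - s q`, for fixed `r ∈ K n`, are
already realised inside the finite group `K n`, so take finitely many values. Then
`x ↦ (x - s ↑x, ↑x)` is a bijection `G ≃ H × G ⧸ H` with inverse `(h, q) ↦ h + s q`, and for
fixed `c` both maps send `x` and `x + c` to points whose difference ranges over a finite set.
For proper invariant metrics this is exactly coarseness. Such metrics exist on every countable
group: for an exhausting sequence of finite symmetric sets `F n ∋ 0`, let the length of `x` be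
the least `n` such that `x` is a sum of `n` elements of `F n`.
-/

open Pointwise Function

section Metric

variable {A B : Type*} [AddGroup A] [AddGroup B]

lemma IsProperInvAddMetric.apply_eq_apply_zero_neg_add {d : A → A → ℝ}
    (hd : IsProperInvAddMetric d) (x y : A) : d x y = d 0 (-x + y) := by
  simpa using (hd.2.2.2.2.1 (-x) x y).symm

lemma IsProperInvAddMetric.prod {d₁ : A → A → ℝ} {d₂ : B → B → ℝ}
    (h₁ : IsProperInvAddMetric d₁) (h₂ : IsProperInvAddMetric d₂) :
    IsProperInvAddMetric fun p q : A × B => d₁ p.1 q.1 + d₂ p.2 q.2 := by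
  obtain ⟨nonneg₁, zero₁, symm₁, tri₁, inv₁, fin₁⟩ := h₁
  obtain ⟨nonneg₂, zero₂, symm₂, tri₂, inv₂, fin₂⟩ := h₂
  refine ⟨fun p q => add_nonneg (nonneg₁ _ _) (nonneg₂ _ _), fun p q => ?_,
    fun p q => by dsimp only; rw [symm₁, symm₂], fun p q r => ?_,
    fun g p q => by simp [inv₁, inv₂], fun p K => ?_⟩
  · rw [add_eq_zero_iff_of_nonneg (nonneg₁ _ _) (nonneg₂ _ _), zero₁, zero₂, Prod.ext_iff]
  · linarith [tri₁ p.1 q.1 r.1, tri₂ p.2 q.2 r.2]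
  · refine ((fin₁ p.1 K).prod (fin₂ p.2 K)).subset fun q (hq : _ + _ ≤ K) => ⟨?_, ?_⟩
    · exact (le_add_of_nonneg_right (nonneg₂ _ _)).trans hq
    · exact (le_add_of_nonneg_left (nonneg₁ _ _)).trans hq

lemma isProperInvAddMetric_of_length (L : A → ℕ) (hL₀ : ∀ x, L x = 0 ↔ x = 0)
    (hL_neg : ∀ x, L (-x) = L x) (hL_add : ∀ x y, L (x + y) ≤ L x + L y)
    (hL_fin : ∀ N, {x | L x ≤ N}.Finite) :
    IsProperInvAddMetric fun x y => (L (-x + y) : ℝ) := by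
  refine ⟨fun x y => by positivity, fun x y => ?_, fun x y => ?_, fun x y z => ?_,
    fun g x y => by simp [neg_add_rev, add_assoc], fun x K => ?_⟩
  · rw [Nat.cast_eq_zero, hL₀, neg_add_eq_zero]
  · dsimp only
    rw [← hL_neg, neg_add_rev, neg_neg]
  · have := hL_add (-x + y) (-y + z)
    simp only [add_assoc, add_neg_cancel_left] at this
    dsimp only
    exact_mod_cast this
  · refine ((hL_fin ⌊K⌋₊).image (x + ·)).subset fun y hy => ⟨-x + y, ?_, by simp⟩
    exact Nat.le_floor hy

lemma exists_isProperInvAddMetric_of_exhaustion (F : ℕ → Set A) (hF_mono : Monotone F)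
    (hF₀ : ∀ n, (0 : A) ∈ F n) (hF_neg : ∀ n, -F n = F n) (hF_fin : ∀ n, (F n).Finite)
    (hF_cover : ∀ x, ∃ n, x ∈ F n) :
    ∃ d : A → A → ℝ, IsProperInvAddMetric d := by
  classical
  have hB_mono {m n : ℕ} (h : m ≤ n) : m • F m ⊆ n • F n :=
    Set.nsmul_subset_nsmul (hF_mono h) (hF₀ n) h
  have hB : ∀ x, ∃ n, x ∈ n • F n := fun x =>
    let ⟨n, hn⟩ := hF_cover x
    ⟨n + 1, Set.subset_nsmul (hF₀ _) n.succ_ne_zero (hF_mono n.le_succ hn)⟩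
  let L x := Nat.find (hB x)
  have hL_mem x : x ∈ L x • F (L x) := Nat.find_spec (hB x)
  have hL_le {x n} (h : x ∈ n • F n) : L x ≤ n := Nat.find_min' _ h
  have hL_neg_le x : L (-x) ≤ L x :=
    hL_le (by rw [← hF_neg, neg_nsmul]; exact Set.neg_mem_neg.mpr (hL_mem x))
  refine ⟨_, isProperInvAddMetric_of_length L (fun x => ⟨fun h => ?_, ?_⟩)
    (fun x => le_antisymm (hL_neg_le x) (by simpa using hL_neg_le (-x)))
    (fun x y => hL_le ?_) (fun N => ?_)⟩
  · simpa [h] using hL_mem x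
  · rintro rfl
    exact Nat.le_zero.mp (hL_le (by simp))
  · rw [add_nsmul]
    exact Set.add_mem_add
      (Set.nsmul_subset_nsmul_left (hF_mono (Nat.le_add_right _ _)) (hL_mem x))
      (Set.nsmul_subset_nsmul_left (hF_mono (Nat.le_add_left _ _)) (hL_mem y))
  · have hfin : ∀ n : ℕ, (n • F N).Finite := fun n => by
      induction n with
      | zero => simp
      | succ n ih => rw [succ_nsmul]; exact ih.add (hF_fin N)
    exact (hfin N).subset fun x hx => hB_mono hx (hL_mem x)

lemma exists_isProperInvAddMetric (A : Type*) [AddGroup A] [Countable A] :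
    ∃ d : A → A → ℝ, IsProperInvAddMetric d := by
  obtain ⟨e, he⟩ := exists_surjective_nat A
  let S n := e '' Set.Iic n
  refine exists_isProperInvAddMetric_of_exhaustion (fun n => insert 0 (S n ∪ -S n))
    (fun m n h => ?_) (fun n => Set.mem_insert _ _) (fun n => ?_)
    (fun n => (((Set.finite_Iic n).image e).union ((Set.finite_Iic n).image e).neg).insert 0)
    (fun x => ?_)
  · have : S m ⊆ S n := Set.image_mono (Set.Iic_subset_Iic.mpr h)
    exact Set.insert_subset_insert (Set.union_subset_union this (Set.neg_subset_neg.mpr this))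
  · simp [Set.union_comm]
  · obtain ⟨n, rfl⟩ := he x
    exact ⟨n, Or.inr (Or.inl ⟨n, Set.mem_Iic.mpr le_rfl, rfl⟩)⟩

end Metric

section Coarse

variable {X Y : Type*} [AddGroup X] [AddGroup Y]

lemma isCoarseMap_of_finite_range_neg_add {dX : X → X → ℝ} {dY : Y → Y → ℝ}
    (hdX : IsProperInvAddMetric dX) (hdY : IsProperInvAddMetric dY) {f : X → Y}
    (hf : ∀ c, (Set.range fun x => -f x + f (x + c)).Finite) : IsCoarseMap dX dY f := by
  intro δ _
  have hD : (⋃ c ∈ {c | dX 0 c ≤ δ}, Set.range fun x => -f x + f (x + c)).Finite :=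
    (hdX.2.2.2.2.2 0 δ).biUnion fun c _ => hf c
  obtain ⟨M, hM⟩ := (hD.image (dY 0)).bddAbove
  refine ⟨M, fun x y hxy => ?_⟩
  rw [hdY.apply_eq_apply_zero_neg_add]
  refine hM ⟨_, Set.mem_biUnion (x := -x + y) ?_ ⟨x, by simp⟩, rfl⟩
  exact (hdX.apply_eq_apply_zero_neg_add x y).symm.trans_le hxy

lemma isCoarseEquiv_of_equiv {dX : X → X → ℝ} {dY : Y → Y → ℝ}
    (hdX : IsProperInvAddMetric dX) (hdY : IsProperInvAddMetric dY) (e : X ≃ Y)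
    (he : IsCoarseMap dX dY e) (he_symm : IsCoarseMap dY dX e.symm) :
    IsCoarseEquiv dX dY e :=
  ⟨he, e.symm, he_symm, ⟨0, fun x => by simp [(hdX.2.1 x x).mpr rfl]⟩,
    ⟨0, fun y => by simp [(hdY.2.1 y y).mpr rfl]⟩⟩

end Coarse

section TowerSection

variable {G Q : Type*} [AddCommGroup G] [AddCommGroup Q]

lemma AddMonoidHom.exists_section_map_zero (π : G →+ Q) (hπ : Surjective π) :
    ∃ σ : Q → G, (∀ q, π (σ q) = q) ∧ σ 0 = 0 :=
  ⟨fun q => surjInv hπ q - surjInv hπ 0, fun q => by simp [surjInv_eq hπ], sub_self _⟩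

lemma AddSubgroup.exists_coset_rep (K : AddSubgroup Q) :
    ∃ ρ : Q → Q, ρ 0 = 0 ∧ (∀ q, q - ρ q ∈ K) ∧ ∀ q, ∀ r ∈ K, ρ (q + r) = ρ q := by
  obtain ⟨σ, hσ, hσ₀⟩ :=
    (QuotientAddGroup.mk' K).exists_section_map_zero (QuotientAddGroup.mk'_surjective K)
  refine ⟨σ ∘ QuotientAddGroup.mk' K, hσ₀, fun q => ?_, fun q r hr => ?_⟩
  · rw [← QuotientAddGroup.eq_zero_iff, QuotientAddGroup.mk_sub]
    simpa [sub_eq_zero] using (hσ q).symm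
  · simp [(QuotientAddGroup.eq_zero_iff r).mpr hr]

/-- Built from a section `σ` of `G → Q` and representatives `ρ m` of `Q` modulo `K m`. -/
def towerSection (σ : Q → G) (ρ : ℕ → Q → Q) : ℕ → Q → G
  | 0 => σ
  | m + 1 => fun q => σ (ρ m q) + towerSection σ ρ m (q - ρ m q)

variable {π : G →+ Q} {σ : Q → G} {ρ : ℕ → Q → Q} {K : ℕ → AddSubgroup Q}

lemma map_towerSection (hσ : ∀ q, π (σ q) = q) : ∀ m q, π (towerSection σ ρ m q) = q
  | 0, q => hσ q
  | m + 1, q => by simp [towerSection, hσ, map_towerSection hσ m]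

lemma towerSection_succ_of_mem (hσ₀ : σ 0 = 0) (hρ₀ : ∀ m, ρ m 0 = 0)
    (hρ_add : ∀ m q, ∀ r ∈ K m, ρ m (q + r) = ρ m q) {m : ℕ} {q : Q} (hq : q ∈ K m) :
    towerSection σ ρ (m + 1) q = towerSection σ ρ m q := by
  have hρq : ρ m q = 0 := by simpa [hρ₀] using hρ_add m 0 q hq
  simp [towerSection, hρq, hσ₀]

lemma towerSection_eq_of_le (hK : Monotone K) (hσ₀ : σ 0 = 0) (hρ₀ : ∀ m, ρ m 0 = 0)
    (hρ_add : ∀ m q, ∀ r ∈ K m, ρ m (q + r) = ρ m q) {m n : ℕ} (hmn : m ≤ n) {q : Q}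
    (hq : q ∈ K m) : towerSection σ ρ n q = towerSection σ ρ m q := by
  induction n, hmn using Nat.le_induction with
  | base => rfl
  | succ n hmn ih => rw [towerSection_succ_of_mem hσ₀ hρ₀ hρ_add (hK hmn hq), ih]

/-- Since `ρ m (q + r) = ρ m q`, passing from level `m + 1` to `m` subtracts the same lift
`σ (ρ m q)` from both terms of the defect. -/
lemma towerSection_sub_mem_image (hK : Monotone K) (hρ_mem : ∀ m q, q - ρ m q ∈ K m)
    (hρ_add : ∀ m q, ∀ r ∈ K m, ρ m (q + r) = ρ m q) {n : ℕ} {r : Q} (hr : r ∈ K n)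
    {m : ℕ} (hnm : n ≤ m) {q : Q} (hq : q ∈ K m) :
    towerSection σ ρ m (q + r) - towerSection σ ρ m q ∈
      (fun x => towerSection σ ρ n (x + r) - towerSection σ ρ n x) '' (K n : Set Q) := by
  induction m, hnm using Nat.le_induction generalizing q with
  | base => exact ⟨q, hq, rfl⟩
  | succ m hnm ih =>
    have hρ : ρ m (q + r) = ρ m q := hρ_add m q r (hK hnm hr)
    have hshift : q + r - ρ m q = q - ρ m q + r := sub_add_eq_add_sub q (ρ m q) r |>.symm
    simpa [towerSection, hρ, hshift] using ih (hρ_mem m q)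

lemma AddMonoidHom.exists_section_finite_range_sub_of_exhaustion (π : G →+ Q)
    (hπ : Surjective π) (K : ℕ → AddSubgroup Q) (hK : Monotone K)
    (hK_fin : ∀ n, (K n : Set Q).Finite) (hK_cover : ∀ q, ∃ n, q ∈ K n) :
    ∃ s : Q → G, (∀ q, π (s q) = q) ∧ s 0 = 0 ∧
      ∀ r, (Set.range fun q => s (q + r) - s q).Finite := by
  classical
  obtain ⟨σ, hσ, hσ₀⟩ := π.exists_section_map_zero hπ
  choose ρ hρ₀ hρ_mem hρ_add using fun m => (K m).exists_coset_rep
  let level q := Nat.find (hK_cover q)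
  have h_level q : q ∈ K (level q) := Nat.find_spec (hK_cover q)
  have h_eq {m : ℕ} {q : Q} (hq : q ∈ K m) :
      towerSection σ ρ (level q) q = towerSection σ ρ m q := by
    rw [← towerSection_eq_of_le hK hσ₀ hρ₀ hρ_add (le_max_left (level q) m) (h_level q),
      towerSection_eq_of_le hK hσ₀ hρ₀ hρ_add (le_max_right (level q) m) hq]
  refine ⟨fun q => towerSection σ ρ (level q) q, fun q => map_towerSection hσ _ q,
    (h_eq (K 0).zero_mem).trans hσ₀, fun r => ?_⟩
  refine ((hK_fin (level r)).image
    fun x => towerSection σ ρ (level r) (x + r) - towerSection σ ρ (level r) x).subset ?_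
  rintro _ ⟨q, rfl⟩
  let m := max (level r) (max (level q) (level (q + r)))
  have hq : q ∈ K m := hK (le_max_of_le_right (le_max_left _ _)) (h_level q)
  have hqr : q + r ∈ K m := hK (le_max_of_le_right (le_max_right _ _)) (h_level (q + r))
  simp only [h_eq hq, h_eq hqr]
  exact towerSection_sub_mem_image hK hρ_mem hρ_add (h_level r) (le_max_left _ _) hq

end TowerSection

lemma IsAddTorsion.exists_finite_addSubgroup_exhaustion {Q : Type*} [AddCommGroup Q]
    [Countable Q] (hQ : IsAddTorsion Q) :
    ∃ K : ℕ → AddSubgroup Q, Monotone K ∧ (∀ n, (K n : Set Q).Finite) ∧ ∀ q, ∃ n, q ∈ K n := by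
  obtain ⟨e, he⟩ := exists_surjective_nat Q
  refine ⟨fun n => AddSubgroup.closure (e '' Set.Iic n),
    fun m n h => AddSubgroup.closure_mono (Set.image_mono (Set.Iic_subset_Iic.mpr h)),
    fun n => ?_, fun q => ?_⟩
  · have : Finite (e '' Set.Iic n) := ((Set.finite_Iic n).image e).to_subtype
    have := AddCommGroup.finite_of_fg_isAddTorsion _
      (hQ.addSubgroup (AddSubgroup.closure (e '' Set.Iic n)))
    exact Set.toFinite _
  · obtain ⟨n, rfl⟩ := he q
    exact ⟨n, AddSubgroup.subset_closure ⟨n, Set.mem_Iic.mpr le_rfl, rfl⟩⟩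

section Splitting

variable {G : Type*} [AddCommGroup G]

@[simps]
def AddSubgroup.equivProdQuotientOfSection (H : AddSubgroup G) (s : G ⧸ H → G)
    (hs : ∀ q, (s q : G ⧸ H) = q) : G ≃ H × (G ⧸ H) where
  toFun x := (⟨x - s x, by
    rw [← QuotientAddGroup.eq_zero_iff, QuotientAddGroup.mk_sub, hs, sub_self]⟩, x)
  invFun p := p.1 + s p.2
  left_inv x := sub_add_cancel x _
  right_inv p := by
    have hp : ((p.1 + s p.2 : G) : G ⧸ H) = p.2 := by
      rw [QuotientAddGroup.mk_add, (QuotientAddGroup.eq_zero_iff _).mpr p.1.2, hs, zero_add]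
    exact Prod.ext (Subtype.ext (by simp [hp])) hp

variable {H : AddSubgroup G} {s : G ⧸ H → G} {dG : G → G → ℝ} {dH : H → H → ℝ}
  {dQ : G ⧸ H → G ⧸ H → ℝ}

lemma isCoarseMap_equivProdQuotientOfSection (hdG : IsProperInvAddMetric dG)
    (hdH : IsProperInvAddMetric dH) (hdQ : IsProperInvAddMetric dQ)
    (hs : ∀ q, (s q : G ⧸ H) = q) (hs_fin : ∀ r, (Set.range fun q => s (q + r) - s q).Finite) :
    IsCoarseMap dG (fun p q => dH p.1 q.1 + dQ p.2 q.2) (H.equivProdQuotientOfSection s hs) := by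
  refine isCoarseMap_of_finite_range_neg_add hdG (hdH.prod hdQ) fun c => ?_
  refine (((hs_fin c).image fun w => (c - w, (c : G ⧸ H))).preimage
    (Subtype.val_injective.prodMap injective_id).injOn).subset ?_
  rintro _ ⟨x, rfl⟩
  refine ⟨_, ⟨x, rfl⟩, Prod.ext ?_ ?_⟩
  · simp only [AddSubgroup.equivProdQuotientOfSection_apply, Prod.neg_mk, Prod.mk_add_mk,
      Prod.map_apply, AddSubgroup.coe_add, NegMemClass.coe_neg, QuotientAddGroup.mk_add]
    abel
  · simp

lemma isCoarseMap_equivProdQuotientOfSection_symm (hdG : IsProperInvAddMetric dG)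
    (hdH : IsProperInvAddMetric dH) (hdQ : IsProperInvAddMetric dQ)
    (hs : ∀ q, (s q : G ⧸ H) = q) (hs_fin : ∀ r, (Set.range fun q => s (q + r) - s q).Finite) :
    IsCoarseMap (fun p q => dH p.1 q.1 + dQ p.2 q.2) dG
      (H.equivProdQuotientOfSection s hs).symm := by
  refine isCoarseMap_of_finite_range_neg_add (hdH.prod hdQ) hdG fun c => ?_
  refine (((hs_fin c.2).image ((c.1 : G) + ·))).subset ?_
  rintro _ ⟨p, rfl⟩
  refine ⟨_, ⟨p.2, rfl⟩, ?_⟩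
  simp only [AddSubgroup.equivProdQuotientOfSection_symm_apply, Prod.fst_add, Prod.snd_add,
    AddSubgroup.coe_add]
  abel

end Splitting

/-- For an odd pair `(G, H)` the exact sequence `0 → H → G → G/H → 0` coarsely splits. -/
theorem stmt12 {G : Type*} [AddCommGroup G] [Countable G]
    (H : AddSubgroup G) (hodd : ∀ x : G ⧸ H, Odd (addOrderOf x)) :
    ∃ (dH : H → H → ℝ) (dG : G → G → ℝ) (dQ : (G ⧸ H) → (G ⧸ H) → ℝ),
      IsProperInvAddMetric dH ∧ IsProperInvAddMetric dG ∧ IsProperInvAddMetric dQ ∧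
      ∃ f : G → H × (G ⧸ H),
        IsCoarseEquiv dG (fun p q => dH p.1 q.1 + dQ p.2 q.2) f ∧
        (∀ h : H, f (h : G) = (h, 0)) ∧
        ∀ x : G, (f x).2 = QuotientAddGroup.mk' H x := by
  have : Countable (G ⧸ H) := (QuotientAddGroup.mk'_surjective H).countable
  have htor : IsAddTorsion (G ⧸ H) := fun x => addOrderOf_pos_iff.mp (hodd x).pos
  obtain ⟨K, hK, hK_fin, hK_cover⟩ := htor.exists_finite_addSubgroup_exhaustion
  obtain ⟨s, hs, hs₀, hs_fin⟩ :=
    (QuotientAddGroup.mk' H).exists_section_finite_range_sub_of_exhaustion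
      (QuotientAddGroup.mk'_surjective H) K hK hK_fin hK_cover
  replace hs : ∀ q, (s q : G ⧸ H) = q := hs
  obtain ⟨dH, hdH⟩ := exists_isProperInvAddMetric H
  obtain ⟨dG, hdG⟩ := exists_isProperInvAddMetric G
  obtain ⟨dQ, hdQ⟩ := exists_isProperInvAddMetric (G ⧸ H)
  refine ⟨dH, dG, dQ, hdH, hdG, hdQ, H.equivProdQuotientOfSection s hs,
    isCoarseEquiv_of_equiv hdG (hdH.prod hdQ) _
      (isCoarseMap_equivProdQuotientOfSection hdG hdH hdQ hs hs_fin)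
      (isCoarseMap_equivProdQuotientOfSection_symm hdG hdH hdQ hs hs_fin),
    fun h => ?_, fun x => rfl⟩
  simp [(QuotientAddGroup.eq_zero_iff _).mpr h.2, hs₀]
end

section
/- Every countable locally finite abelian group G admits a proper left invariant ultrametric d_u such that (G, d_u) is isometric to (⊕_{i=1}^{∞} ℤ_{pᵢ}, d_L) for some sequence of primes (pᵢ) and some proper invariant ultrametric d_L on the direct sum. -/
/-! Write `G` as the union of a strictly increasing chain `1 = A₀ < A₁ < ⋯` of finite subgroups
(countability and local finiteness) and split each index `[A_{n+1} : A_n]` into primes; listing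
these primes in order gives `pᵢ`, and the subgroups `K_n` of `⊕ ℤ_{pᵢ}` supported on the first
`k_n` coordinates satisfy `|K_n| = |A_n|`. For any such chain, `d(x, y) = min {n | x⁻¹y ∈ A_n}` is
a proper left invariant ultrametric. A bijection `A_n → K_n` preserving this level function extends
to `A_{n+1} → K_{n+1}` by matching left transversals of `A_n` in `A_{n+1}` with those of `K_n` in
`K_{n+1}`, and the union of these extensions is the required isometry. -/

open Finset Function

theorem List.prod_range_length_eq_prod {M : Type*} [CommMonoid M] {l : List M} {f : ℕ → M}
    (h : ∀ i (hi : i < l.length), f i = l[i]) : ∏ i ∈ Finset.range l.length, f i = l.prod := by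
  rw [← Fin.prod_univ_eq_prod_range, ← Fin.prod_univ_getElem]
  exact Finset.prod_congr rfl fun i _ => h i i.2

theorem List.exists_getElem_eq_of_prefix_succ {α : Type*} {C : ℕ → List α}
    (hC : ∀ n, C n <+: C (n + 1)) (hlen : ∀ i, ∃ n, i < (C n).length) :
    ∃ p : ℕ → α, ∀ n i (hi : i < (C n).length), p i = (C n)[i] := by
  have hprefix : ∀ a b, a ≤ b → C a <+: C b := fun a b hab => by
    induction b, hab using Nat.le_induction with
    | base => exact List.prefix_refl _
    | succ b _ ih => exact ih.trans (hC b)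
  refine ⟨fun i => (C (hlen i).choose)[i]'(hlen i).choose_spec, fun n i hi => ?_⟩
  dsimp only
  rw [(hprefix _ _ (le_max_left _ n)).getElem (hlen i).choose_spec,
    (hprefix _ _ (le_max_right _ n)).getElem hi]

theorem Nat.exists_primes_prod_range_eq {m : ℕ → ℕ} (h0 : m 0 = 1) (hdvd : ∀ n, m n ∣ m (n + 1))
    (hlt : ∀ n, m n < m (n + 1)) :
    ∃ p : ℕ → ℕ, (∀ i, (p i).Prime) ∧
      ∃ k : ℕ → ℕ, k 0 = 0 ∧ StrictMono k ∧ ∀ n, ∏ i ∈ range (k n), p i = m n := by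
  set L : ℕ → List ℕ := fun n => (m (n + 1) / m n).primeFactorsList
  set C : ℕ → List ℕ := fun n => (List.range n).flatMap L
  have hC : ∀ n, C (n + 1) = C n ++ L n := by simp [C, List.range_succ]
  have hpos : ∀ n, 0 < m n := fun n => by
    cases n with
    | zero => simp [h0]
    | succ n => exact (Nat.zero_le _).trans_lt (hlt n)
  have hL : ∀ n, L n ≠ [] := fun n => by
    have hq : 1 < m (n + 1) / m n := by
      by_contra! h
      nlinarith [Nat.div_mul_cancel (hdvd n), hlt n, hpos n]
    simp only [L, ne_eq, Nat.primeFactorsList_eq_nil]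
    omega
  have hlen : StrictMono fun n => (C n).length :=
    strictMono_nat_of_lt_succ fun n => by simp [hC, List.length_pos_iff.mpr (hL n)]
  have hprod : ∀ n, (C n).prod = m n := fun n => by
    induction n with
    | zero => simp [C, h0]
    | succ n ih =>
      rw [hC, List.prod_append, ih, Nat.prod_primeFactorsList, Nat.mul_div_cancel' (hdvd n)]
      exact (Nat.div_pos (Nat.le_of_dvd (hpos _) (hdvd n)) (hpos n)).ne'
  have hprime : ∀ n, ∀ q ∈ C n, q.Prime := fun n q hq => by
    obtain ⟨j, -, hj⟩ := List.mem_flatMap.mp hq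
    exact Nat.prime_of_mem_primeFactorsList hj
  obtain ⟨p, hp⟩ := List.exists_getElem_eq_of_prefix_succ (C := C)
    (fun n => hC n ▸ List.prefix_append _ _) fun i => ⟨i + 1, hlen.id_le (i + 1)⟩
  refine ⟨p, fun i => hprime _ _ (hp _ i (hlen.id_le (i + 1)) ▸ List.getElem_mem _),
    fun n => (C n).length, rfl, hlen, fun n => ?_⟩
  rw [List.prod_range_length_eq_prod (hp n), hprod]

theorem Monotone.exists_strictMono_comp {α : Type*} [Preorder α] {a : ℕ → α} (ha : Monotone a)
    (h : ∀ n, ∃ j, a n < a j) : ∃ ψ : ℕ → ℕ, ψ 0 = 0 ∧ StrictMono ψ ∧ StrictMono (a ∘ ψ) := by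
  choose φ hφ using h
  have hlt : ∀ n, n < φ n := fun n => lt_of_not_ge fun hle => (hφ n).not_ge (ha hle)
  refine ⟨fun n => φ^[n] 0, rfl, strictMono_nat_of_lt_succ fun n => ?_,
    strictMono_nat_of_lt_succ fun n => ?_⟩
  · simpa only [iterate_succ_apply'] using hlt _
  · simpa only [comp_apply, iterate_succ_apply'] using hφ _

theorem Set.Finite.exists_bijOn_apply_eq {α β : Type*} {s : Set α} {t : Set β} (hs : s.Finite)
    (ht : t.Finite) (hst : s.ncard = t.ncard) {a : α} {b : β} (ha : a ∈ s) (hb : b ∈ t) :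
    ∃ σ : α → β, BijOn σ s t ∧ σ a = b := by
  classical
  have : Nonempty β := ⟨b⟩
  obtain ⟨σ, hσ⟩ := hs.exists_bijOn_of_encard_eq (t := t)
    (by rw [← hs.cast_ncard_eq, ← ht.cast_ncard_eq, hst])
  exact ⟨Equiv.swap (σ a) b ∘ σ, (Equiv.bijOn_swap (hσ.mapsTo ha) hb).comp hσ,
    Equiv.swap_apply_left _ _⟩

theorem Set.InjOn.bijOn_of_ncard_eq {α β : Type*} {f : α → β} {s : Set α} {t : Set β}
    (hinj : InjOn f s) (hmaps : MapsTo f s t) (hst : s.ncard = t.ncard) (ht : t.Finite) :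
    BijOn f s t :=
  ⟨hmaps, hinj, (Set.eq_of_subset_of_ncard_le hmaps.image_subset
    (by rw [hinj.ncard_image, hst]) ht).symm.subset⟩

namespace Subgroup

variable {G : Type*} [Group G]

theorem card_lt_card_of_lt {B B' : Subgroup G} [Finite B'] (h : B < B') :
    Nat.card B < Nat.card B' :=
  (card_le_of_le h.le).lt_of_ne fun heq => h.ne (eq_of_le_of_card_ge h.le heq.ge)

theorem IsComplement.ncard_inter_mul_card {S : Set G} {B B' : Subgroup G}
    (hS : IsComplement S B) (hle : B ≤ B') : (S ∩ B').ncard * Nat.card B = Nat.card B' := by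
  rw [← Nat.card_coe_set_eq, ← Nat.card_prod]
  refine Nat.card_congr (Equiv.ofBijective (fun x => ⟨x.1 * x.2, mul_mem x.1.2.2 (hle x.2.2)⟩)
    ⟨fun x y hxy => ?_, fun g => ?_⟩)
  · have := @hS.1 (⟨x.1, x.1.2.1⟩, x.2) (⟨y.1, y.1.2.1⟩, y.2) (congrArg Subtype.val hxy)
    simp only [Prod.mk.injEq, Subtype.mk.injEq] at this
    exact Prod.ext (Subtype.ext this.1) this.2
  · refine ⟨(⟨(hS.equiv g).1, (hS.equiv g).1.2, ?_⟩, (hS.equiv g).2),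
      Subtype.ext (hS.equiv_fst_mul_equiv_snd g)⟩
    rw [SetLike.mem_coe, hS.equiv_fst_eq_mul_inv]
    exact mul_mem g.2 (hle (inv_mem (hS.equiv g).2.2))

theorem IsComplement.inv_mul_mem_iff {S : Set G} {B : Subgroup G} (hS : IsComplement S B)
    {s s' b b' : G} (hs : s ∈ S) (hs' : s' ∈ S) (hb : b ∈ B) (hb' : b' ∈ B) :
    (s * b)⁻¹ * (s' * b') ∈ B ↔ s = s' := by
  have := hS.equiv_fst_eq_iff_leftCosetEquivalence (g₁ := s * b) (g₂ := s' * b')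
  rw [hS.equiv_mul_right_of_mem hb, hS.equiv_mul_right_of_mem hb',
    hS.equiv_fst_eq_self_of_mem_of_one_mem B.one_mem hs,
    hS.equiv_fst_eq_self_of_mem_of_one_mem B.one_mem hs', LeftCosetEquivalence,
    leftCoset_eq_iff] at this
  simpa using this.symm

theorem exists_bijOn_inter_transversals {H : Type*} [Group H] {B B' : Subgroup G}
    {C C' : Subgroup H} [Finite B'] [Finite C'] (hB : B ≤ B') (hC : C ≤ C')
    (hcard : Nat.card B = Nat.card C) (hcard' : Nat.card B' = Nat.card C') :
    ∃ (S : Set G) (T : Set H) (σ : G → H), IsComplement S B ∧ 1 ∈ S ∧ IsComplement T C ∧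
      Set.BijOn σ (S ∩ B') (T ∩ C') ∧ σ 1 = 1 := by
  have : Finite B := Finite.of_injective _ (inclusion_injective hB)
  obtain ⟨S, hS, hS1⟩ := B.exists_isComplement_left 1
  obtain ⟨T, hT, hT1⟩ := C.exists_isComplement_left 1
  obtain ⟨σ, hσ, hσ1⟩ := Set.Finite.exists_bijOn_apply_eq (s := S ∩ B') (t := T ∩ C')
    (Set.toFinite _) (Set.toFinite _)
    (Nat.eq_of_mul_eq_mul_right Nat.card_pos (by
      rw [hS.ncard_inter_mul_card hB, hcard, hcard', ← hT.ncard_inter_mul_card hC]))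
    ⟨hS1, one_mem _⟩ ⟨hT1, one_mem _⟩
  exact ⟨S, T, σ, hS, hS1, hT, hσ, hσ1⟩

end Subgroup

section Chain

variable {G : Type*} [Group G]

noncomputable def chainLevel (A : ℕ → Subgroup G) (x : G) : ℕ := sInf {n | x ∈ A n}

noncomputable def chainDist (A : ℕ → Subgroup G) (x y : G) : ℝ := chainLevel A (x⁻¹ * y)

theorem chainLevel_one (A : ℕ → Subgroup G) : chainLevel A 1 = 0 :=
  Nat.sInf_eq_zero.mpr (Or.inl (A 0).one_mem)

structure IsFiniteExhaustion (A : ℕ → Subgroup G) : Prop where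
  monotone : Monotone A
  zero_eq_bot : A 0 = ⊥
  finite : ∀ n, Finite (A n)
  exists_mem : ∀ x, ∃ n, x ∈ A n

namespace IsFiniteExhaustion

variable {A : ℕ → Subgroup G}

theorem chainLevel_le_iff (hA : IsFiniteExhaustion A) {x : G} {n : ℕ} :
    chainLevel A x ≤ n ↔ x ∈ A n :=
  ⟨fun h => hA.monotone h (Nat.sInf_mem (hA.exists_mem x)), fun h => Nat.sInf_le h⟩

theorem mem_chainLevel (hA : IsFiniteExhaustion A) (x : G) : x ∈ A (chainLevel A x) :=
  hA.chainLevel_le_iff.mp le_rfl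

theorem chainLevel_eq_zero_iff (hA : IsFiniteExhaustion A) {x : G} :
    chainLevel A x = 0 ↔ x = 1 := by
  rw [← Nat.le_zero, hA.chainLevel_le_iff, hA.zero_eq_bot, Subgroup.mem_bot]

theorem chainLevel_inv (hA : IsFiniteExhaustion A) (x : G) : chainLevel A x⁻¹ = chainLevel A x :=
  eq_of_forall_ge_iff fun n => by rw [hA.chainLevel_le_iff, hA.chainLevel_le_iff, inv_mem_iff]

theorem chainLevel_mul_le (hA : IsFiniteExhaustion A) (x y : G) :
    chainLevel A (x * y) ≤ max (chainLevel A x) (chainLevel A y) :=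
  hA.chainLevel_le_iff.mpr (mul_mem (hA.monotone (le_max_left _ _) (hA.mem_chainLevel x))
    (hA.monotone (le_max_right _ _) (hA.mem_chainLevel y)))

theorem chainLevel_eq_succ (hA : IsFiniteExhaustion A) {x : G} {n : ℕ} (hx : x ∈ A (n + 1))
    (hxn : x ∉ A n) : chainLevel A x = n + 1 :=
  le_antisymm (hA.chainLevel_le_iff.mpr hx) (lt_of_not_ge (mt hA.chainLevel_le_iff.mp hxn))

theorem chainDist_le_max (hA : IsFiniteExhaustion A) (x y z : G) :
    chainDist A x z ≤ max (chainDist A x y) (chainDist A y z) := by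
  have := hA.chainLevel_mul_le (x⁻¹ * y) (y⁻¹ * z)
  rw [mul_assoc, mul_inv_cancel_left] at this
  simp only [chainDist]
  exact_mod_cast this

theorem isProperLeftInvMetric_chainDist (hA : IsFiniteExhaustion A) :
    IsProperLeftInvMetric (chainDist A) := by
  refine ⟨fun x y => Nat.cast_nonneg _, fun x y => ?_, fun x y => ?_, fun x y z => ?_,
    fun g x y => ?_, fun x r => ?_⟩
  · rw [chainDist, Nat.cast_eq_zero, hA.chainLevel_eq_zero_iff, inv_mul_eq_one]
  · rw [chainDist, chainDist, ← hA.chainLevel_inv, mul_inv_rev, inv_inv]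
  · exact (hA.chainDist_le_max x y z).trans
      (max_le_add_of_nonneg (Nat.cast_nonneg _) (Nat.cast_nonneg _))
  · rw [chainDist, chainDist, mul_inv_rev, mul_assoc, inv_mul_cancel_left]
  · have := hA.finite ⌊r⌋₊
    refine ((A ⌊r⌋₊ : Set G).toFinite.preimage (mul_right_injective x⁻¹).injOn).subset
      fun y hy => ?_
    exact hA.chainLevel_le_iff.mp (Nat.le_floor hy)

theorem exists_strictMono [Infinite G] (hA : IsFiniteExhaustion A) :
    ∃ B : ℕ → Subgroup G, IsFiniteExhaustion B ∧ StrictMono B := by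
  have hgrow : ∀ n, ∃ j, A n < A j := fun n => by
    have := hA.finite n
    obtain ⟨x, -, hx⟩ := Set.infinite_univ.exists_notMem_finite (A n : Set G).toFinite
    obtain ⟨j, hj⟩ := hA.exists_mem x
    exact ⟨max n j, SetLike.lt_iff_le_and_exists.mpr
      ⟨hA.monotone (le_max_left _ _), x, hA.monotone (le_max_right _ _) hj, hx⟩⟩
  obtain ⟨ψ, hψ0, hψ, hAψ⟩ := hA.monotone.exists_strictMono_comp hgrow
  refine ⟨A ∘ ψ, ⟨hAψ.monotone, by simp [hψ0, hA.zero_eq_bot], fun n => hA.finite _,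
    fun x => ?_⟩, hAψ⟩
  obtain ⟨n, hn⟩ := hA.exists_mem x
  exact ⟨n, hA.monotone (hψ.id_le n) hn⟩

end IsFiniteExhaustion

theorem exists_isFiniteExhaustion [Countable G]
    (hlf : ∀ S : Finset G, ((Subgroup.closure (S : Set G)) : Set G).Finite) :
    ∃ A : ℕ → Subgroup G, IsFiniteExhaustion A := by
  classical
  obtain ⟨e, he⟩ := exists_surjective_nat G
  refine ⟨fun n => Subgroup.closure ((range n).image e : Set G),
    ⟨fun a b hab => Subgroup.closure_mono ?_, by simp, fun n => (hlf _).to_subtype, fun x => ?_⟩⟩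
  · exact_mod_cast image_subset_image (range_subset_range.mpr hab)
  · obtain ⟨i, rfl⟩ := he x
    exact ⟨i + 1, Subgroup.subset_closure (by simpa using ⟨i, le_rfl, rfl⟩)⟩

end Chain

section ChainIso

variable {G H : Type*} [Group G] [Group H] {A : ℕ → Subgroup G} {K : ℕ → Subgroup H}

def IsChainIsoOn (A : ℕ → Subgroup G) (K : ℕ → Subgroup H) (n : ℕ) (f : G → H) : Prop :=
  Set.BijOn f (A n) (K n) ∧
    ∀ x ∈ A n, ∀ y ∈ A n, chainLevel K ((f x)⁻¹ * f y) = chainLevel A (x⁻¹ * y)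

theorem isChainIsoOn_zero (hA : A 0 = ⊥) (hK : K 0 = ⊥) : IsChainIsoOn A K 0 fun _ => 1 := by
  refine ⟨?_, fun x hx y hy => ?_⟩
  · rw [hA, hK, Subgroup.coe_bot, Subgroup.coe_bot]
    exact Set.bijOn_singleton.mpr rfl
  · rw [hA, Subgroup.mem_bot] at hx hy
    simp [hx, hy, chainLevel_one]

theorem IsChainIsoOn.exists_extend (hA : IsFiniteExhaustion A) (hK : IsFiniteExhaustion K)
    (hcard : ∀ n, Nat.card (A n) = Nat.card (K n)) {n : ℕ} {f : G → H}
    (hf : IsChainIsoOn A K n f) :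
    ∃ f', IsChainIsoOn A K (n + 1) f' ∧ Set.EqOn f' f (A n) := by
  have := hA.finite (n + 1)
  have := hK.finite (n + 1)
  have hAle := hA.monotone n.le_succ
  have hKle := hK.monotone n.le_succ
  obtain ⟨S, T, σ, hS, hS1, hT, hσ, hσ1⟩ :=
    Subgroup.exists_bijOn_inter_transversals hAle hKle (hcard n) (hcard (n + 1))
  set s : G → G := fun x => (hS.equiv x).1
  set a : G → G := fun x => (hS.equiv x).2
  have hsa : ∀ x, s x * a x = x := hS.equiv_fst_mul_equiv_snd
  have ha : ∀ x, a x ∈ A n := fun x => (hS.equiv x).2.2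
  have hs : ∀ x ∈ A (n + 1), s x ∈ S ∩ A (n + 1) := fun x hx => by
    refine ⟨(hS.equiv x).1.2, ?_⟩
    rw [SetLike.mem_coe, ← mul_inv_cancel_right (s x) (a x), hsa]
    exact mul_mem hx (hAle (inv_mem (ha x)))
  set f' : G → H := fun x => σ (s x) * f (a x)
  have hf'A : ∀ x ∈ A (n + 1), f' x ∈ K (n + 1) := fun x hx =>
    mul_mem (hσ.mapsTo (hs x hx)).2 (hKle (hf.1.mapsTo (ha x)))
  have hlevel : ∀ x ∈ A (n + 1), ∀ y ∈ A (n + 1),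
      chainLevel K ((f' x)⁻¹ * f' y) = chainLevel A (x⁻¹ * y) := by
    intro x hx y hy
    by_cases hxy : s x = s y
    · have hAxy : x⁻¹ * y = (a x)⁻¹ * a y := by
        conv_lhs => rw [← hsa x, ← hsa y, hxy, mul_inv_rev, mul_assoc, inv_mul_cancel_left]
      have hKxy : (f' x)⁻¹ * f' y = (f (a x))⁻¹ * f (a y) := by
        simp only [f', hxy, mul_inv_rev, mul_assoc, inv_mul_cancel_left]
      rw [hAxy, hKxy]
      exact hf.2 _ (ha x) _ (ha y)
    · have hAxy : x⁻¹ * y ∉ A n := by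
        rw [show x⁻¹ * y = (s x * a x)⁻¹ * (s y * a y) by rw [hsa, hsa],
          hS.inv_mul_mem_iff (hs x hx).1 (hs y hy).1 (ha x) (ha y)]
        exact hxy
      have hKxy : (f' x)⁻¹ * f' y ∉ K n := by
        rw [hT.inv_mul_mem_iff (hσ.mapsTo (hs x hx)).1 (hσ.mapsTo (hs y hy)).1
          (hf.1.mapsTo (ha x)) (hf.1.mapsTo (ha y)), hσ.injOn.eq_iff (hs x hx) (hs y hy)]
        exact hxy
      rw [hA.chainLevel_eq_succ (mul_mem (inv_mem hx) hy) hAxy,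
        hK.chainLevel_eq_succ (mul_mem (inv_mem (hf'A x hx)) (hf'A y hy)) hKxy]
  have hinj : Set.InjOn f' (A (n + 1)) := fun x hx y hy hxy => by
    have h := hlevel x hx y hy
    rwa [hxy, inv_mul_cancel, chainLevel_one, eq_comm, hA.chainLevel_eq_zero_iff,
      inv_mul_eq_one] at h
  refine ⟨f', ⟨hinj.bijOn_of_ncard_eq hf'A ?_ (Set.toFinite _), hlevel⟩, fun x hx => ?_⟩
  · rw [← Nat.card_coe_set_eq, ← Nat.card_coe_set_eq]
    exact hcard (n + 1)
  · have hsx : s x = 1 := (hS.coe_equiv_fst_eq_one_iff_mem hS1).mpr hx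
    have hax : a x = x := (hS.equiv_snd_eq_self_iff_mem hS1).mpr hx
    simp only [f', hsx, hax, hσ1, one_mul]

theorem exists_bijective_chainLevel_eq (hA : IsFiniteExhaustion A) (hK : IsFiniteExhaustion K)
    (hcard : ∀ n, Nat.card (A n) = Nat.card (K n)) :
    ∃ f : G → H, Bijective f ∧
      ∀ x y, chainLevel K ((f x)⁻¹ * f y) = chainLevel A (x⁻¹ * y) := by
  choose! extend hextend hextend_eq using
    fun n (f : G → H) (hf : IsChainIsoOn A K n f) => hf.exists_extend hA hK hcard
  let F : ℕ → G → H := fun n => Nat.rec (fun _ => 1) extend n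
  have hF : ∀ n, IsChainIsoOn A K n (F n) := fun n => by
    induction n with
    | zero => exact isChainIsoOn_zero hA.zero_eq_bot hK.zero_eq_bot
    | succ n ih => exact hextend n _ ih
  have hF_eq : ∀ n m, n ≤ m → Set.EqOn (F m) (F n) (A n) := fun n m hnm => by
    induction m, hnm using Nat.le_induction with
    | base => exact Set.eqOn_refl _ _
    | succ m hnm ih => exact ((hextend_eq m _ (hF m)).mono (hA.monotone hnm)).trans ih
  set f : G → H := fun x => F (chainLevel A x) x
  have hf : ∀ n, ∀ x ∈ A n, f x = F n x := fun n x hx =>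
    (hF_eq _ n (hA.chainLevel_le_iff.mpr hx) (hA.mem_chainLevel x)).symm
  have hmem : ∀ x y : G, x ∈ A (max (chainLevel A x) (chainLevel A y)) ∧
      y ∈ A (max (chainLevel A x) (chainLevel A y)) := fun x y =>
    ⟨hA.monotone (le_max_left _ _) (hA.mem_chainLevel x),
      hA.monotone (le_max_right _ _) (hA.mem_chainLevel y)⟩
  refine ⟨f, ⟨fun x y hxy => ?_, fun u => ?_⟩, fun x y => ?_⟩
  · obtain ⟨hx, hy⟩ := hmem x y
    rw [hf _ x hx, hf _ y hy] at hxy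
    exact (hF _).1.injOn hx hy hxy
  · obtain ⟨n, hn⟩ := hK.exists_mem u
    obtain ⟨x, hx, rfl⟩ := (hF n).1.surjOn hn
    exact ⟨x, hf n x hx⟩
  · obtain ⟨hx, hy⟩ := hmem x y
    rw [hf _ x hx, hf _ y hy]
    exact (hF _).2 x hx y hy

end ChainIso

section SupportedBelow

variable (β : ℕ → Type*) [∀ i, AddGroup (β i)]

def supportedBelow (k : ℕ) : AddSubgroup (Π₀ i, β i) where
  carrier := {x | ∀ i, k ≤ i → x i = 0}
  zero_mem' _ _ := rfl
  add_mem' ha hb i hi := by simp [ha i hi, hb i hi]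
  neg_mem' ha i hi := by simp [ha i hi]

def supportedBelowEquiv (k : ℕ) : supportedBelow β k ≃ ∀ i : range k, β i where
  toFun x i := x.1 i
  invFun v := ⟨DFinsupp.mk (range k) v, fun i hi => by simp [DFinsupp.mk_apply, hi]⟩
  left_inv x := Subtype.ext <| DFinsupp.ext fun i => by
    by_cases hi : i < k
    · simp [DFinsupp.mk_apply, hi]
    · simp [DFinsupp.mk_apply, hi, x.2 i (not_lt.mp hi)]
  right_inv v := funext fun i => by simp [DFinsupp.mk_apply, i.2]

theorem card_supportedBelow (k : ℕ) :
    Nat.card (supportedBelow β k) = ∏ i ∈ range k, Nat.card (β i) := by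
  rw [Nat.card_congr (supportedBelowEquiv β k), Nat.card_pi]
  exact prod_coe_sort (range k) fun i => Nat.card (β i)

variable {β}

theorem isFiniteExhaustion_supportedBelow [∀ i, Finite (β i)] {k : ℕ → ℕ} (hk0 : k 0 = 0)
    (hk : StrictMono k) : IsFiniteExhaustion fun n => (supportedBelow β (k n)).toSubgroup := by
  classical
  refine ⟨fun a b hab x hx i hi => hx i ((hk.monotone hab).trans hi), ?_, fun n => ?_, fun x => ?_⟩
  · refine (Subgroup.eq_bot_iff_forall _).mpr fun x hx => ?_
    exact toAdd_eq_zero.mp (DFinsupp.ext fun i => hx i (by simp [hk0]))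
  · exact Finite.of_equiv _ (supportedBelowEquiv β (k n)).symm
  · obtain ⟨n, hn⟩ := (x.toAdd).support.exists_nat_subset_range
    refine ⟨n, fun i hi => DFinsupp.notMem_support_iff.mp fun hmem => ?_⟩
    exact (mem_range.mp (hn hmem)).not_ge ((hk.id_le n).trans hi)

end SupportedBelow

/-- Every countably infinite locally finite abelian group admits a proper left invariant
ultrametric isometric to `(⊕ᵢ ℤ_{pᵢ}, d_L)` for some sequence of primes `pᵢ` and some
proper invariant ultrametric `d_L`. -/
theorem stmt14 {G : Type*} [CommGroup G] [Countable G] [Infinite G]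
    (hlf : ∀ S : Finset G, ((Subgroup.closure (S : Set G)) : Set G).Finite) :
    ∃ p : ℕ → ℕ, (∀ i, (p i).Prime) ∧
      ∃ (du : G → G → ℝ) (dL : (Π₀ i, ZMod (p i)) → (Π₀ i, ZMod (p i)) → ℝ),
        IsProperLeftInvMetric du ∧ (∀ x y z : G, du x z ≤ max (du x y) (du y z)) ∧
        IsProperInvAddMetric dL ∧
        (∀ x y z : (Π₀ i, ZMod (p i)), dL x z ≤ max (dL x y) (dL y z)) ∧
        ∃ f : G → Π₀ i, ZMod (p i),
          Function.Bijective f ∧ ∀ x y, dL (f x) (f y) = du x y := by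
  obtain ⟨A₀, hA₀⟩ := exists_isFiniteExhaustion hlf
  obtain ⟨A, hA, hAmono⟩ := hA₀.exists_strictMono
  have := hA.finite
  obtain ⟨p, hp, k, hk0, hk, hprod⟩ :=
    Nat.exists_primes_prod_range_eq (m := fun n => Nat.card (A n)) (by simp [hA.zero_eq_bot])
      (fun n => Subgroup.card_dvd_of_le (hAmono.monotone n.le_succ))
      (fun n => Subgroup.card_lt_card_of_lt (hAmono (lt_add_one n)))
  have := fun i => Fact.mk (hp i)
  set K := fun n => (supportedBelow (fun i => ZMod (p i)) (k n)).toSubgroup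
  have hK : IsFiniteExhaustion K := isFiniteExhaustion_supportedBelow hk0 hk
  have hcard : ∀ n, Nat.card (A n) = Nat.card (K n) := fun n => by
    rw [← hprod n]
    exact ((card_supportedBelow _ (k n)).trans (prod_congr rfl fun i _ => Nat.card_zmod _)).symm
  obtain ⟨f, hf, hfK⟩ := exists_bijective_chainLevel_eq hA hK hcard
  -- on `Multiplicative (Π₀ i, ZMod (p i))` the axioms of `IsProperInvAddMetric` are literally
  -- those of `IsProperLeftInvMetric`
  refine ⟨p, hp, chainDist A, fun u v => chainDist K (.ofAdd u) (.ofAdd v),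
    hA.isProperLeftInvMetric_chainDist, hA.chainDist_le_max, hK.isProperLeftInvMetric_chainDist,
    fun u v w => hK.chainDist_le_max _ _ _, fun x => (f x).toAdd,
    Multiplicative.toAdd.bijective.comp hf, fun x y => congrArg Nat.cast (hfK x y)⟩
end
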